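/- arXiv:2111.04365 — 6 statements merged into one kernel-verified Lean document; each statement's English description precedes it below -/
import Mathlib

section
/- Let X be a nonempty set with a generic binary relation ⊥. Then the semi-simplicial set X_•^⊥ is boundedly acyclic and connected: the cochain complex 0 → ℓ^∞(X_0^⊥) → ℓ^∞(X_1^⊥) → ℓ^∞(X_2^⊥) → ⋯ with the alternating-sum coboundary maps has cohomology equal to ℝ in degree 0 and 0 in all positive degrees. -/
/-- A real-valued function is bounded. -/
def IsBddFun {α : Type*} (f : α → ℝ) : Prop := ∃ C : ℝ, ∀ x, |f x| ≤ C

/-- Tuples pairwise related by `r` in increasing index order. -/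
def PairwiseRel {X : Type*} (r : X → X → Prop) {m : ℕ} (f : Fin m → X) : Prop :=
  ∀ i j : Fin m, i < j → r (f i) (f j)

/-- The set `X_n^⊥` of `(n+1)`-tuples pairwise related by `r`. -/
def Splx {X : Type*} (r : X → X → Prop) (n : ℕ) : Type _ :=
  { f : Fin (n + 1) → X // PairwiseRel r f }

/-- Faces of a simplex. -/
def Splx.face {X : Type*} {r : X → X → Prop} {n : ℕ} (i : Fin (n + 2))
    (σ : Splx r (n + 1)) : Splx r n :=
  ⟨σ.1 ∘ i.succAbove, fun _ _ hab => σ.2 _ _ (Fin.succAbove_lt_succAbove_iff.mpr hab)⟩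

/-- The alternating-sum coboundary `ℓ^∞(X_n^⊥) → ℓ^∞(X_{n+1}^⊥)`. -/
noncomputable def scoboundary {X : Type*} {r : X → X → Prop} {n : ℕ}
    (f : Splx r n → ℝ) : Splx r (n + 1) → ℝ :=
  fun σ => ∑ i : Fin (n + 2), (-1 : ℝ) ^ (i : ℕ) * f (Splx.face i σ)

/-!
Genericity makes the sets of common `r`-predecessors of finite sets a filter base; fix an
ultrafilter `U` refining it. Coning off a `U`-generic apex `x` and passing to the limit along
`U`, which exists because cochains are bounded, gives a bounded contracting homotopy: for a
cocycle `c`, the cochain `σ ↦ lim_{x → U} c (x * σ)` has coboundary `c`. In degree `0` the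
same cone shows `c σ = c x` for every apex `x` of `σ`, so `c` is constant.
-/

open Filter Topology

theorem Ultrafilter.exists_tendsto_of_abs_le {α : Type*} (U : Ultrafilter α) {g : α → ℝ}
    {C : ℝ} (hC : ∀ x, |g x| ≤ C) : ∃ a, |a| ≤ C ∧ Tendsto g U (𝓝 a) := by
  have hmem : Set.Icc (-C) C ∈ U.map g :=
    Ultrafilter.mem_map.mpr <| univ_mem' fun x => abs_le.mp (hC x)
  obtain ⟨a, ha, hlim⟩ := isCompact_Icc.ultrafilter_le_nhds (U.map g) (le_principal_iff.mpr hmem)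
  exact ⟨a, abs_le.mpr ha, hlim⟩

theorem IsBddFun.exists_nonneg {α : Type*} {f : α → ℝ} (hf : IsBddFun f) :
    ∃ C, 0 ≤ C ∧ ∀ x, |f x| ≤ C :=
  let ⟨C, hC⟩ := hf
  ⟨max C 0, le_max_right C 0, fun x => (hC x).trans (le_max_left C 0)⟩

section Apex

variable {X : Type*} {r : X → X → Prop}

def apexFilter (r : X → X → Prop) : Filter X :=
  ⨅ F : Finset X, 𝓟 {x | ∀ y ∈ F, r x y}

theorem apexFilter_neBot (hgen : ∀ F : Finset X, ∃ x : X, ∀ y ∈ F, r x y) :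
    (apexFilter r).NeBot := by
  classical
  refine iInf_neBot_of_directed' (fun F G => ⟨F ∪ G, ?_, ?_⟩)
    fun F => principal_neBot_iff.mpr (hgen F)
  all_goals
    refine principal_mono.mpr fun x hx y hy => hx y ?_
    simp [hy]

theorem eventually_apexFilter {n : ℕ} (σ : Splx r n) :
    ∀ᶠ x in apexFilter r, ∀ i, r x (σ.1 i) := by
  classical
  refine mem_iInf_of_mem (Finset.univ.image σ.1) (mem_principal.mpr fun x hx i => hx _ ?_)
  exact Finset.mem_image_of_mem _ (Finset.mem_univ i)

end Apex

namespace Splx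

variable {X : Type*} {r : X → X → Prop}

def cone {n : ℕ} (x : X) (σ : Splx r n) (hx : ∀ i, r x (σ.1 i)) : Splx r (n + 1) :=
  ⟨Fin.cons x σ.1, by
    intro i j hij
    induction j using Fin.cases with
    | zero => exact absurd hij (Fin.not_lt_zero i)
    | succ j =>
      induction i using Fin.cases with
      | zero => exact hx j
      | succ i => exact σ.2 i j (Fin.succ_lt_succ_iff.mp hij)⟩

def pt (x : X) : Splx r 0 :=
  ⟨fun _ => x, fun i j hij => absurd hij <| by
    rw [Subsingleton.elim (α := Fin 1) i j]
    exact lt_irrefl j⟩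

@[simp]
theorem face_zero_cone {n : ℕ} (x : X) (σ : Splx r n) (hx : ∀ i, r x (σ.1 i)) :
    face 0 (cone x σ hx) = σ :=
  Subtype.ext <| funext fun j => by simp [face, cone]

theorem face_one_cone (x : X) (σ : Splx r 0) (hx : ∀ i, r x (σ.1 i)) :
    face 1 (cone x σ hx) = pt x :=
  Subtype.ext <| funext fun j => by
    rw [Subsingleton.elim (α := Fin 1) j 0]
    simp [face, cone, pt]

theorem face_succ_cone {n : ℕ} (x : X) (σ : Splx r (n + 1)) (hx : ∀ i, r x (σ.1 i))
    (k : Fin (n + 2)) :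
    face k.succ (cone x σ hx) = cone x (face k σ) (fun i => hx (k.succAbove i)) :=
  Subtype.ext <| funext fun j => by
    induction j using Fin.cases with
    | zero => simp [face, cone]
    | succ m => simp [face, cone, Fin.removeNth]

theorem scoboundary_cone_of_zero (c : Splx r 0 → ℝ) (x : X) (σ : Splx r 0)
    (hx : ∀ i, r x (σ.1 i)) : scoboundary c (cone x σ hx) = c σ - c (pt x) := by
  simp [scoboundary, Fin.sum_univ_two, face_one_cone, sub_eq_add_neg]

theorem scoboundary_cone {n : ℕ} (c : Splx r (n + 1) → ℝ) (x : X) (σ : Splx r (n + 1))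
    (hx : ∀ i, r x (σ.1 i)) :
    scoboundary c (cone x σ hx) =
      c σ - ∑ i : Fin (n + 2), (-1 : ℝ) ^ (i : ℕ) *
        c (cone x (face i σ) (fun j => hx (i.succAbove j))) := by
  simp [scoboundary, Fin.sum_univ_succ (n := n + 2), face_succ_cone, pow_succ,
    Finset.sum_neg_distrib, sub_eq_add_neg]

theorem exists_const_of_scoboundary_eq_zero (l : Filter X) [l.NeBot]
    (hl : ∀ σ : Splx r 0, ∀ᶠ x in l, ∀ i, r x (σ.1 i)) {c : Splx r 0 → ℝ}
    (hc : scoboundary c = 0) : ∃ κ : ℝ, ∀ σ, c σ = κ := by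
  have hcone : ∀ σ x (hx : ∀ i, r x (σ.1 i)), c σ = c (pt x) := fun σ x hx => by
    simpa [sub_eq_zero, hc] using (scoboundary_cone_of_zero c x σ hx).symm
  obtain ⟨x₀⟩ := l.nonempty_of_neBot
  refine ⟨c (pt x₀), fun σ => ?_⟩
  obtain ⟨z, hzσ, hz₀⟩ := ((hl σ).and (hl (pt x₀))).exists
  rw [hcone σ z hzσ, hcone (pt x₀) z hz₀]

theorem scoboundary_const (κ : ℝ) : scoboundary (fun _ : Splx r 0 => κ) = 0 :=
  funext fun σ => by simp [scoboundary, Fin.sum_univ_two]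

section PositiveDegree

variable {n : ℕ}

noncomputable def coneValue (c : Splx r (n + 1) → ℝ) (σ : Splx r n) (x : X) : ℝ :=
  open Classical in if h : ∀ i, r x (σ.1 i) then c (cone x σ h) else 0

theorem coneValue_of_apex (c : Splx r (n + 1) → ℝ) {σ : Splx r n} {x : X}
    (hx : ∀ i, r x (σ.1 i)) : coneValue c σ x = c (cone x σ hx) :=
  dif_pos hx

theorem abs_coneValue_le {c : Splx r (n + 1) → ℝ} {C : ℝ} (hC : ∀ σ, |c σ| ≤ C) (hC₀ : 0 ≤ C)
    (σ : Splx r n) (x : X) : |coneValue c σ x| ≤ C := by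
  unfold coneValue
  split_ifs
  · exact hC _
  · simpa using hC₀

theorem sum_coneValue_face_of_scoboundary_eq_zero {c : Splx r (n + 1) → ℝ}
    (hc : scoboundary c = 0) {τ : Splx r (n + 1)} {x : X} (hx : ∀ i, r x (τ.1 i)) :
    ∑ i : Fin (n + 2), (-1 : ℝ) ^ (i : ℕ) * coneValue c (face i τ) x = c τ := by
  have := scoboundary_cone c x τ hx
  simp only [hc, Pi.zero_apply] at this
  have hface : ∀ i : Fin (n + 2), coneValue c (face i τ) x =
      c (cone x (face i τ) (fun j => hx (i.succAbove j))) := fun i => coneValue_of_apex c _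
  simp only [hface]
  linarith

/-- The contracting homotopy: `c` on the cone over `σ`, as the apex goes to infinity along `U`. -/
noncomputable def coneLimit (U : Ultrafilter X) (c : Splx r (n + 1) → ℝ) (σ : Splx r n) : ℝ :=
  limUnder (U : Filter X) (coneValue c σ)

variable {U : Ultrafilter X} {c : Splx r (n + 1) → ℝ}

theorem tendsto_coneLimit_and_abs_le {C : ℝ} (hC : ∀ σ, |c σ| ≤ C) (hC₀ : 0 ≤ C) (σ : Splx r n) :
    Tendsto (coneValue c σ) U (𝓝 (coneLimit U c σ)) ∧ |coneLimit U c σ| ≤ C := by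
  obtain ⟨a, ha, hlim⟩ := U.exists_tendsto_of_abs_le (abs_coneValue_le hC hC₀ σ)
  rw [coneLimit, hlim.limUnder_eq]
  exact ⟨hlim, ha⟩

theorem isBddFun_coneLimit (hc : IsBddFun c) : IsBddFun (coneLimit U c) :=
  let ⟨C, hC₀, hC⟩ := hc.exists_nonneg
  ⟨C, fun σ => (tendsto_coneLimit_and_abs_le hC hC₀ σ).2⟩

theorem scoboundary_coneLimit (hU : ∀ τ : Splx r (n + 1), ∀ᶠ x in U, ∀ i, r x (τ.1 i))
    (hb : IsBddFun c) (hc : scoboundary c = 0) : scoboundary (coneLimit U c) = c := by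
  obtain ⟨C, hC₀, hC⟩ := hb.exists_nonneg
  have hlim := tendsto_coneLimit_and_abs_le (U := U) hC hC₀
  funext τ
  refine tendsto_nhds_unique (tendsto_finsetSum _ fun i _ => (hlim (face i τ)).1.const_mul _) ?_
  exact tendsto_const_nhds.congr' <| (hU τ).mono fun x hx =>
    (sum_coneValue_face_of_scoboundary_eq_zero hc hx).symm

end PositiveDegree

end Splx

theorem generic_splx_boundedly_acyclic_general {X : Type*} (r : X → X → Prop)
    (hgen : ∀ F : Finset X, ∃ x : X, ∀ y ∈ F, r x y) :
    -- H^0 ≅ ℝ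
    ((∀ c : Splx r 0 → ℝ, IsBddFun c → scoboundary c = 0 → ∃ κ : ℝ, ∀ σ, c σ = κ) ∧
      (∀ κ : ℝ, scoboundary (fun _ : Splx r 0 => κ) = 0)) ∧
    -- H^n = 0 for all n > 0
    (∀ (n : ℕ) (c : Splx r (n + 1) → ℝ), IsBddFun c → scoboundary c = 0 →
      ∃ b : Splx r n → ℝ, IsBddFun b ∧ scoboundary b = c) := by
  have := apexFilter_neBot hgen
  let U := Ultrafilter.of (apexFilter r)
  have hU {n : ℕ} (σ : Splx r n) : ∀ᶠ x in (U : Filter X), ∀ i, r x (σ.1 i) :=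
    Ultrafilter.of_le _ (eventually_apexFilter σ)
  exact ⟨⟨fun c _ hc => Splx.exists_const_of_scoboundary_eq_zero (apexFilter r)
      eventually_apexFilter hc, Splx.scoboundary_const⟩,
    fun n c hb hc =>
      ⟨Splx.coneLimit U c, Splx.isBddFun_coneLimit hb, Splx.scoboundary_coneLimit hU hb hc⟩⟩

/-- for a generic relation `⊥` on a nonempty set `X`, the semi-simplicial set
`X_•^⊥` is connected and boundedly acyclic: the cohomology of the bounded cochain complex is
`ℝ` in degree `0` (every degree-0 cocycle is constant, and constants are cocycles) and
vanishes in all positive degrees. -/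
theorem generic_splx_boundedly_acyclic {X : Type*} [Nonempty X] (r : X → X → Prop)
    (hgen : ∀ F : Finset X, ∃ x : X, ∀ y ∈ F, r x y) :
    -- H^0 ≅ ℝ
    ((∀ c : Splx r 0 → ℝ, IsBddFun c → scoboundary c = 0 → ∃ κ : ℝ, ∀ σ, c σ = κ) ∧
      (∀ κ : ℝ, scoboundary (fun _ : Splx r 0 => κ) = 0)) ∧
    -- H^n = 0 for all n > 0
    (∀ (n : ℕ) (c : Splx r (n + 1) → ℝ), IsBddFun c → scoboundary c = 0 →
      ∃ b : Splx r n → ℝ, IsBddFun b ∧ scoboundary b = c) :=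
  generic_splx_boundedly_acyclic_general r hgen
end

section
/- There exist a subset Z_0 ⊆ ℝ and an element g ∈ Homeo_c(ℝ), where Homeo_c(ℝ) is the group of compactly supported homeomorphisms of ℝ, such that every finite subset of Homeo_c(ℝ) can be conjugated by a single element into the subgroup of elements supported in Z_0, and g^p(Z_0) ∩ Z_0 = ∅ for all integers p ≥ 1. -/
noncomputable section

/-- Build a permutation of `ℝ` from a strictly monotone surjection. -/
def toPerm (f : ℝ → ℝ) (h : StrictMono f) (hs : Function.Surjective f) :
    Equiv.Perm ℝ := (StrictMono.orderIsoOfSurjective f h hs).toEquiv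

theorem toPerm_apply (f : ℝ → ℝ) (h : StrictMono f) (hs : Function.Surjective f) (x : ℝ) :
    toPerm f h hs x = f x := rfl

theorem toPerm_cont (f : ℝ → ℝ) (h : StrictMono f) (hs : Function.Surjective f) :
    Continuous (toPerm f h hs) ∧ Continuous (toPerm f h hs).symm :=
  ⟨(StrictMono.orderIsoOfSurjective f h hs).continuous,
   (StrictMono.orderIsoOfSurjective f h hs).symm.continuous⟩

/-- The displacing homeomorphism: identity outside `[-2,10]`, pushes `[-1,1]` above `1`. -/
def gfun (x : ℝ) : ℝ :=
  min (max x (11/3 * x + 16/3)) (max (x/9 + 80/9) x)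

theorem gfun_strictMono : StrictMono gfun := by
  intro a b h
  unfold gfun
  exact min_lt_min (max_lt_max h (by linarith)) (max_lt_max (by linarith) h)

theorem gfun_continuous : Continuous gfun := by
  unfold gfun; fun_prop

theorem gfun_eq_self {x : ℝ} (hx : 10 ≤ x ∨ x ≤ -2) : gfun x = x := by
  unfold gfun
  rcases hx with hx | hx
  · rw [max_eq_right (by linarith : x/9 + 80/9 ≤ x)]
    exact min_eq_right (le_max_left _ _)
  · rw [max_eq_left (by linarith : 11/3 * x + 16/3 ≤ x)]
    exact min_eq_left (le_max_right _ _)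

theorem gfun_surj : Function.Surjective gfun := by
  intro y
  have hb0 : (0:ℝ) ≤ |y| := abs_nonneg y
  have h1 : gfun (-(|y| + 10)) = -(|y| + 10) := gfun_eq_self (Or.inr (by linarith))
  have h2 : gfun (|y| + 10) = |y| + 10 := gfun_eq_self (Or.inl (by linarith))
  have hsub := intermediate_value_Icc
    (by linarith : -(|y| + 10) ≤ |y| + 10) gfun_continuous.continuousOn
  rw [h1, h2] at hsub
  obtain ⟨x, -, hx⟩ := hsub (show y ∈ Set.Icc (-(|y| + 10)) (|y| + 10) from
    ⟨by linarith [neg_abs_le y], by linarith [le_abs_self y]⟩)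
  exact ⟨x, hx⟩

theorem gfun_ge (x : ℝ) : x ≤ gfun x :=
  le_min (le_max_left _ _) (le_max_right _ _)

theorem gfun_gt {x : ℝ} (hx : x ∈ Set.Icc (-1:ℝ) 1) : 1 < gfun x := by
  obtain ⟨h1, h2⟩ := hx
  exact lt_min (lt_of_lt_of_le (by linarith : (1:ℝ) < 11/3 * x + 16/3) (le_max_right _ _))
    (lt_of_lt_of_le (by linarith : (1:ℝ) < x/9 + 80/9) (le_max_left _ _))

/-- The squeezing homeomorphism: maps `[-M,M]` onto `[-1,1]`, identity outside `[-(M+1),M+1]`. -/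
def kfun (M x : ℝ) : ℝ :=
  max (min (max x (M*x + M^2 - 1)) (x/M)) (min (M*x - M^2 + 1) x)

theorem kfun_strictMono {M : ℝ} (hM : 1 ≤ M) : StrictMono (kfun M) := by
  have hM0 : (0:ℝ) < M := by linarith
  intro a b h
  unfold kfun
  have hMab : M * a < M * b := by nlinarith
  have hdiv : a / M < b / M := by gcongr
  exact max_lt_max (min_lt_min (max_lt_max h (by linarith)) hdiv) (min_lt_min (by linarith) h)

theorem kfun_continuous (M : ℝ) : Continuous (kfun M) := by
  unfold kfun; fun_prop

theorem kfun_eq_self {M x : ℝ} (hM : 1 ≤ M) (hx : M + 1 ≤ x ∨ x ≤ -(M+1)) :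
    kfun M x = x := by
  have hM0 : (0:ℝ) < M := by linarith
  unfold kfun
  rcases hx with hx | hx
  · rw [min_eq_right (by nlinarith : x ≤ M*x - M^2 + 1)]
    refine max_eq_right (le_trans (min_le_right _ _) ?_)
    exact div_le_self (by linarith) hM
  · rw [max_eq_left (by nlinarith : M*x + M^2 - 1 ≤ x),
      min_eq_left (by rw [le_div_iff₀ hM0]; nlinarith : x ≤ x / M)]
    exact max_eq_left (min_le_right _ _)

theorem kfun_small {M x : ℝ} (hM : 1 ≤ M) (hx : x ∈ Set.Icc (-M) M) :
    kfun M x = x / M := by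
  have hM0 : (0:ℝ) < M := by linarith
  obtain ⟨hx1, hx2⟩ := hx
  have hA : (0:ℝ) ≤ M^2 - 1 := by nlinarith
  have h1 : M*x - M^2 + 1 ≤ x/M := by
    rw [le_div_iff₀ hM0]
    nlinarith [mul_nonpos_of_nonneg_of_nonpos hA (by linarith : x - M ≤ 0)]
  have h2 : x/M ≤ M*x + M^2 - 1 := by
    rw [div_le_iff₀ hM0]
    nlinarith [mul_nonneg hA (by linarith : (0:ℝ) ≤ x + M)]
  unfold kfun
  rw [min_eq_right (le_trans h2 (le_max_right _ _))]
  exact max_eq_left (le_trans (min_le_left _ _) h1)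

theorem kfun_surj {M : ℝ} (hM : 1 ≤ M) : Function.Surjective (kfun M) := by
  intro y
  have hb0 : (0:ℝ) ≤ |y| := abs_nonneg y
  have h1 : kfun M (-(|y| + M + 1)) = -(|y| + M + 1) :=
    kfun_eq_self hM (Or.inr (by linarith))
  have h2 : kfun M (|y| + M + 1) = |y| + M + 1 :=
    kfun_eq_self hM (Or.inl (by linarith))
  have hsub := intermediate_value_Icc
    (by linarith : -(|y| + M + 1) ≤ |y| + M + 1) (kfun_continuous M).continuousOn
  rw [h1, h2] at hsub
  obtain ⟨x, -, hx⟩ := hsub (show y ∈ Set.Icc (-(|y| + M + 1)) (|y| + M + 1) from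
    ⟨by linarith [neg_abs_le y], by linarith [le_abs_self y]⟩)
  exact ⟨x, hx⟩

end

/-- A compactly supported homeomorphism of `ℝ`, as a permutation of `ℝ` that is a
homeomorphism and equals the identity outside a compact set. -/
def IsCptSuppHomeo (f : Equiv.Perm ℝ) : Prop :=
  Continuous f ∧ Continuous f.symm ∧ ∃ K : Set ℝ, IsCompact K ∧ ∀ x ∉ K, f x = x

/-- the group `Homeo_c(ℝ)` of compactly supported homeomorphisms of `ℝ`
satisfies the hypotheses of the bounded-acyclicity criterion: there exist `Z₀ ⊆ ℝ` and a
compactly supported homeomorphism `g` such that every finite subset of `Homeo_c(ℝ)` can be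
conjugated by a single element into the elements supported in `Z₀`, and `g^p(Z₀)` is
disjoint from `Z₀` for every integer `p ≥ 1`. -/
theorem homeoC_real_displacement :
    ∃ (Z₀ : Set ℝ) (g : Equiv.Perm ℝ), IsCptSuppHomeo g ∧
      (∀ F : Finset (Equiv.Perm ℝ), (∀ f ∈ F, IsCptSuppHomeo f) →
        ∃ k : Equiv.Perm ℝ, IsCptSuppHomeo k ∧
          ∀ f ∈ F, ∀ x : ℝ, x ∉ Z₀ → (k * f * k⁻¹) x = x) ∧
      (∀ p : ℕ, 1 ≤ p → Disjoint ((g ^ p : Equiv.Perm ℝ) '' Z₀) Z₀) := by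
  refine ⟨Set.Icc (-1) 1, toPerm gfun gfun_strictMono gfun_surj, ?_, ?_, ?_⟩
  · refine ⟨(toPerm_cont _ _ _).1, (toPerm_cont _ _ _).2, Set.Icc (-10) 10, isCompact_Icc, ?_⟩
    intro x hx
    rw [toPerm_apply]
    apply gfun_eq_self
    simp only [Set.mem_Icc, not_and_or, not_le] at hx
    rcases hx with hx | hx
    · right; linarith
    · left; linarith
  · -- conjugation part
    intro F hF
    have hr : ∀ f : Equiv.Perm ℝ, ∃ r : ℝ, f ∈ F → ∀ x : ℝ, r < |x| → f x = x := by
      intro f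
      by_cases hf : f ∈ F
      · obtain ⟨-, -, K, hK, hKf⟩ := hF f hf
        obtain ⟨r, hrK⟩ := hK.isBounded.subset_closedBall 0
        refine ⟨r, fun _ x hx => hKf x fun hxK => ?_⟩
        have := hrK hxK
        rw [Metric.mem_closedBall, Real.dist_eq, sub_zero] at this
        linarith
      · exact ⟨0, fun h => absurd h hf⟩
    choose r hr using hr
    set M : ℝ := 1 + ∑ f ∈ F, |r f| with hMdef
    have hsum : (0:ℝ) ≤ ∑ f ∈ F, |r f| := Finset.sum_nonneg fun _ _ => abs_nonneg _
    have hM1 : (1:ℝ) ≤ M := by simp only [hMdef]; linarith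
    have hM0 : (0:ℝ) < M := by linarith
    have hsupp : ∀ f ∈ F, ∀ x : ℝ, M ≤ |x| → f x = x := by
      intro f hf x hx
      refine hr f hf x (lt_of_lt_of_le ?_ hx)
      have h1 : |r f| ≤ ∑ g ∈ F, |r g| := Finset.single_le_sum (fun i _ => abs_nonneg (r i)) hf
      have := le_abs_self (r f)
      simp only [hMdef]; linarith
    refine ⟨toPerm (kfun M) (kfun_strictMono hM1) (kfun_surj hM1),
      ⟨(toPerm_cont _ _ _).1, (toPerm_cont _ _ _).2,
        Set.Icc (-(M+1)) (M+1), isCompact_Icc, ?_⟩, ?_⟩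
    · intro x hx
      rw [toPerm_apply]
      apply kfun_eq_self hM1
      simp only [Set.mem_Icc, not_and_or, not_le] at hx
      rcases hx with hx | hx
      · right; linarith
      · left; linarith
    · intro f hf x hx
      set k := toPerm (kfun M) (kfun_strictMono hM1) (kfun_surj hM1) with hk
      have hmul : (k * f * k⁻¹) x = k (f (k.symm x)) := by
        rfl
      rw [hmul]
      set y := k.symm x with hy
      have hky : k y = x := Equiv.apply_symm_apply k x
      have hyM : y ∉ Set.Icc (-M) M := by
        intro hmem
        apply hx
        have : kfun M y = y / M := kfun_small hM1 hmem
        rw [hk, toPerm_apply] at hky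
        rw [this] at hky
        rw [← hky]
        constructor
        · rw [le_div_iff₀ hM0]; linarith [hmem.1]
        · rw [div_le_one hM0]; exact hmem.2
      have hfy : f y = y := by
        apply hsupp f hf
        simp only [Set.mem_Icc, not_and_or, not_le] at hyM
        rcases hyM with h | h
        · rw [abs_of_nonpos (by linarith)]; linarith
        · rw [abs_of_nonneg (by linarith)]; linarith
      rw [hfy, hky]
  · -- displacement part
    intro p hp
    set g := toPerm gfun gfun_strictMono gfun_surj with hg
    have hle : ∀ (n : ℕ) (x : ℝ), x ≤ (g ^ n : Equiv.Perm ℝ) x := by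
      intro n
      induction n with
      | zero => intro x; simp
      | succ n ih =>
        intro x
        rw [pow_succ, Equiv.Perm.mul_apply]
        exact le_trans (le_trans (gfun_ge x) (le_of_eq (toPerm_apply _ _ _ _).symm)) (ih (g x))
    obtain ⟨n, rfl⟩ : ∃ n, p = n + 1 := ⟨p - 1, (Nat.succ_pred_eq_of_pos hp).symm⟩
    rw [Set.disjoint_left]
    rintro a ⟨x, hxmem, rfl⟩ hamem
    have h1 : 1 < g x := by rw [hg, toPerm_apply]; exact gfun_gt hxmem
    have h2 : g x ≤ (g ^ (n+1) : Equiv.Perm ℝ) x := by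
      rw [pow_succ, Equiv.Perm.mul_apply]; exact hle n (g x)
    exact absurd hamem.2 (by linarith)
end

section
/- Suppose each group in a family (G_i)_{i∈I} acts faithfully on a set Z_i, with a subset Z_{0,i} ⊆ Z_i and element g_i ∈ G_i satisfying: every finite subset of G_i can be conjugated to be supported in Z_{0,i}, and g_i^p(Z_{0,i}) ∩ Z_{0,i} = ∅ for all p ≥ 1. Then the product group ∏_{i∈I} G_i acting on the disjoint union Z = ⨆ Z_i, with Z_0 = ⨆ Z_{0,i} and g = (g_i)_i, satisfies the same two conditions. -/
/-- if each group `G i` acts faithfully on a set `Z i` with a subset `Z₀ i`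
and an element `g i` satisfying the two displacement conditions (every finite subset of
`G i` can be conjugated to be supported in `Z₀ i`, and `(g i)^p (Z₀ i) ∩ Z₀ i = ∅` for all
`p ≥ 1`), then the product group `∏ i, G i`, acting on the disjoint union `Σ i, Z i`, with
`Z₀ = ⨆ i, Z₀ i` and `g = (g i)_i`, satisfies the same two conditions. -/
theorem product_displacement {I : Type*} {G : I → Type*} [∀ i, Group (G i)]
    {Z : I → Type*} (act : ∀ i, G i →* Equiv.Perm (Z i))
    (hfaith : ∀ i, Function.Injective (act i))
    (Z₀ : ∀ i, Set (Z i)) (g : ∀ i, G i)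
    (hconj : ∀ i, ∀ F : Finset (G i), ∃ k : G i,
      ∀ f ∈ F, ∀ z : Z i, z ∉ Z₀ i → act i (k * f * k⁻¹) z = z)
    (hdisp : ∀ i, ∀ p : ℕ, 1 ≤ p → Disjoint (act i ((g i) ^ p) '' Z₀ i) (Z₀ i)) :
    -- the product acts faithfully on the disjoint union
    (∀ u v : ∀ i, G i, (∀ z : Σ i, Z i, act z.1 (u z.1) z.2 = act z.1 (v z.1) z.2) → u = v) ∧
    -- (i) finite subsets of the product can be conjugated to be supported in `⨆ i, Z₀ i`
    (∀ F : Finset (∀ i, G i), ∃ k : ∀ i, G i,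
      ∀ f ∈ F, ∀ z : Σ i, Z i, z.2 ∉ Z₀ z.1 →
        act z.1 ((k z.1) * (f z.1) * (k z.1)⁻¹) z.2 = z.2) ∧
    -- (ii) the powers of `g = (g i)_i` displace `⨆ i, Z₀ i` off itself
    (∀ p : ℕ, 1 ≤ p → ∀ z : Σ i, Z i, z.2 ∈ Z₀ z.1 →
      act z.1 ((g z.1) ^ p) z.2 ∉ Z₀ z.1) := by
  classical
  refine ⟨?_, ?_, ?_⟩
  · intro u v h
    funext i
    apply hfaith i
    ext z
    exact h ⟨i, z⟩
  · intro F
    have : ∀ i, ∃ k : G i, ∀ f ∈ F.image (fun f => f i), ∀ z : Z i, z ∉ Z₀ i →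
        act i (k * f * k⁻¹) z = z := fun i => hconj i _
    choose k hk using this
    exact ⟨k, fun f hf z hz => hk z.1 (f z.1) (Finset.mem_image_of_mem _ hf) z.2 hz⟩
  · intro p hp z hz hmem
    exact (hdisp z.1 p hp).le_bot ⟨⟨z.2, hz, rfl⟩, hmem⟩
end

section
/- A finite direct product of boundedly acyclic groups is boundedly acyclic: if G_1, …, G_n are groups with H^q_b(G_i; ℝ) = 0 for all q > 0, then H^q_b(G_1 × ⋯ × G_n; ℝ) = 0 for all q > 0. -/
/-- A homogeneous cochain is `G`-invariant. -/
def IsInvCochain {G : Type*} [Group G] {n : ℕ} (c : (Fin n → G) → ℝ) : Prop :=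
  ∀ (g : G) (x : Fin n → G), c (fun i => g * x i) = c x

/-- The simplicial coboundary on homogeneous cochains. -/
noncomputable def gcoboundary {G : Type*} [Group G] {n : ℕ}
    (c : (Fin n → G) → ℝ) : (Fin (n + 1) → G) → ℝ :=
  fun x => ∑ i : Fin (n + 1), (-1 : ℝ) ^ (i : ℕ) * c (x ∘ i.succAbove)

/-- Vanishing of `H^q_b(G;ℝ)` (`q ≥ 1`): every invariant bounded cocycle is the coboundary
of an invariant bounded cochain. -/
def HbVanishAt (G : Type*) [Group G] (q : ℕ) : Prop :=
  ∀ c : (Fin (q + 1) → G) → ℝ, IsInvCochain c → IsBddFun c → gcoboundary c = 0 →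
    ∃ b : (Fin q → G) → ℝ, IsInvCochain b ∧ IsBddFun b ∧ gcoboundary b = c

/-!
For `G = A × B`, the bounded `G`-invariant functions on `Gᵖ × Bᵠ` form a double complex. Its
columns `p ≥ 1` are contractible (cone on the `B`-component of the first group variable), and its
row `q` is the standard complex computing `H^•_b(G; ℓ^∞(Bᵠ))`. A diagram chase shows that if the
rows `q ≥ 1` are exact in positive degrees, then `H^•_b(G)` vanishes as soon as the column `p = 0`,
the standard complex of `B`, is exact.

The rows are handled by the same chase, applied to the double complex on `Gᵖ × Aᵠ × Bʳ`: now the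
rows are contractible, and the column `p = 0` computes bounded cohomology of `A` with coefficients
in `ℓ^∞(Bʳ)`. It vanishes because, by the open mapping theorem, primitives of bounded cocycles of
`A` can be chosen with uniformly controlled norm. Finite products follow by induction.
-/

namespace BoundedCohomology

section Coboundary

variable {X : Type*}

/-- `gcoboundary` for tuples in an arbitrary type, as a linear map; on groups the two agree
definitionally. -/
def coboundary (n : ℕ) : ((Fin n → X) → ℝ) →ₗ[ℝ] (Fin (n + 1) → X) → ℝ where
  toFun c x := ∑ i : Fin (n + 1), (-1 : ℝ) ^ (i : ℕ) * c (x ∘ i.succAbove)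
  map_add' c c' := by ext; simp [mul_add, Finset.sum_add_distrib]
  map_smul' r c := by ext; simp [Finset.mul_sum, mul_left_comm]

variable {n : ℕ}

theorem coboundary_apply (c : (Fin n → X) → ℝ) (x : Fin (n + 1) → X) :
    coboundary n c x = ∑ i : Fin (n + 1), (-1 : ℝ) ^ (i : ℕ) * c (x ∘ i.succAbove) :=
  rfl

theorem neg_one_pow_succAbove_add_predAbove (i : Fin (n + 2)) (j : Fin (n + 1)) :
    (-1 : ℝ) ^ ((i.succAbove j : ℕ) + (j.predAbove i : ℕ)) = -(-1) ^ ((i : ℕ) + (j : ℕ)) := by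
  have : (i.succAbove j : ℕ) + (j.predAbove i : ℕ) + 1 = i + j ∨
      (i.succAbove j : ℕ) + (j.predAbove i : ℕ) = i + j + 1 := by
    simp only [Fin.succAbove, Fin.predAbove, Fin.lt_def, Fin.val_castSucc, apply_dite Fin.val,
      Fin.val_pred, Fin.coe_castPred, apply_ite Fin.val, Fin.val_succ]
    split_ifs <;> omega
  rcases this with h | h
  · rw [← h, pow_succ, mul_neg_one, neg_neg]
  · rw [h, pow_succ, mul_neg_one]

/-- The faces `(i, j)` and `(i.succAbove j, j.predAbove i)` of a double face map cancel. -/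
theorem coboundary_coboundary (c : (Fin n → X) → ℝ) : coboundary (n + 1) (coboundary n c) = 0 := by
  ext x
  simp only [coboundary_apply, Finset.mul_sum, ← Finset.sum_product', ← mul_assoc, ← pow_add,
    Pi.zero_apply]
  refine Finset.sum_ninvolution (fun p => (p.1.succAbove p.2, p.2.predAbove p.1)) (fun p => ?_)
    (fun p _ => ?_) (fun _ => Finset.mem_univ _) (fun p => ?_)
  · have hface : x ∘ p.1.succAbove ∘ p.2.succAbove =
        x ∘ (p.1.succAbove p.2).succAbove ∘ (p.2.predAbove p.1).succAbove := by
      ext k; simp [Fin.succAbove_succAbove_succAbove_predAbove]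
    simp only [Function.comp_assoc] at hface ⊢
    rw [hface, neg_one_pow_succAbove_add_predAbove]; ring
  · exact fun heq => Fin.succAbove_ne p.1 p.2 congr(Prod.fst $heq)
  · simp [Fin.succAbove_succAbove_predAbove, Fin.predAbove_predAbove_succAbove]

theorem coboundary_cons (c : (Fin (n + 1) → X) → ℝ) (a : X) (x : Fin (n + 1) → X) :
    coboundary n (fun t => c (Fin.cons a t)) x = c x - coboundary (n + 1) c (Fin.cons a x) := by
  rw [coboundary_apply (n := n + 1), Fin.sum_univ_succ, Fin.succAbove_zero, Fin.cons_comp_succ]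
  simp [coboundary_apply, pow_succ]
  rfl

theorem abs_coboundary_le {c : (Fin n → X) → ℝ} {C : ℝ} (hc : ∀ x, |c x| ≤ C)
    (x : Fin (n + 1) → X) : |coboundary n c x| ≤ (n + 1) * C := by
  rw [coboundary_apply]
  calc _ ≤ ∑ i : Fin (n + 1), |(-1 : ℝ) ^ (i : ℕ) * c (x ∘ i.succAbove)| :=
        Finset.abs_sum_le_sum_abs _ _
    _ ≤ ∑ _i : Fin (n + 1), C := by
        gcongr with i; simpa using hc _
    _ = (n + 1) * C := by simp

theorem coboundary_fin_zero (c : (Fin 0 → X) → ℝ) (x : Fin 1 → X) (y : Fin 0 → X) :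
    coboundary 0 c x = c y := by
  simp only [coboundary_apply]
  simp [Subsingleton.elim (x ∘ Fin.succ) y]

theorem eq_of_coboundary_eq_zero {c : (Fin 1 → X) → ℝ} (hc : coboundary 1 c = 0)
    (y y' : Fin 1 → X) : c y = c y' := by
  have hface : (Fin.cons (y' 0) y : Fin 2 → X) ∘ Fin.succAbove 1 = y' :=
    funext fun i => by fin_cases i; rfl
  have h := congrFun hc (Fin.cons (y' 0) y)
  simp [coboundary_apply, Fin.sum_univ_two, hface] at h
  linarith

theorem smul_cons {G : Type*} [SMul G X] (g : G) (a : X) (x : Fin n → X) :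
    g • (Fin.cons a x : Fin (n + 1) → X) = Fin.cons (g • a) (g • x) :=
  Fin.comp_cons _ a x

end Coboundary

section Cochains

variable (G X Λ : Type*) [SMul G X] [SMul G Λ]

/-- For `X = G` these are the homogeneous bounded cochains of `G` with coefficients in `ℓ^∞(Λ)`. -/
def cochains (n : ℕ) : Submodule ℝ ((Fin n → X) → Λ → ℝ) where
  carrier := {F | (∃ C, ∀ x l, |F x l| ≤ C) ∧ ∀ (g : G) x l, F (g • x) (g • l) = F x l}
  add_mem' := by
    rintro F F' ⟨⟨C, hC⟩, hF⟩ ⟨⟨C', hC'⟩, hF'⟩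
    exact ⟨⟨C + C', fun x l => (abs_add_le _ _).trans (add_le_add (hC x l) (hC' x l))⟩,
      fun g x l => by simp [hF, hF']⟩
  zero_mem' := ⟨⟨0, by simp⟩, by simp⟩
  smul_mem' := by
    rintro r F ⟨⟨C, hC⟩, hF⟩
    refine ⟨⟨|r| * C, fun x l => ?_⟩, fun g x l => by simp [hF]⟩
    simpa [abs_mul] using mul_le_mul_of_nonneg_left (hC x l) (abs_nonneg r)

variable {X Λ} in
def d {n : ℕ} (F : (Fin n → X) → Λ → ℝ) : (Fin (n + 1) → X) → Λ → ℝ :=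
  fun x l => coboundary n (F · l) x

/-- For `X = G` and `q ≥ 1` this is `H^q_b(G; ℓ^∞(Λ)) = 0`, in the indexing of `HbVanishAt`. -/
def VanishAt (q : ℕ) : Prop :=
  ∀ F ∈ cochains G X Λ (q + 1), d F = 0 → ∃ F' ∈ cochains G X Λ q, d F' = F

variable {G X Λ} {n : ℕ}

theorem d_d (F : (Fin n → X) → Λ → ℝ) : d (d F) = 0 :=
  funext fun x => funext fun l => congrFun (coboundary_coboundary (F · l)) x

theorem d_sub (F F' : (Fin n → X) → Λ → ℝ) : d (F - F') = d F - d F' := by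
  ext x l
  exact congrFun (map_sub (coboundary n) (F · l) (F' · l)) x

theorem d_mem {F : (Fin n → X) → Λ → ℝ} (hF : F ∈ cochains G X Λ n) :
    d F ∈ cochains G X Λ (n + 1) := by
  obtain ⟨⟨C, hC⟩, hinv⟩ := hF
  refine ⟨⟨(n + 1) * C, fun x l => abs_coboundary_le (hC · l) x⟩, fun g x l => ?_⟩
  simp only [d, coboundary_apply]
  exact Finset.sum_congr rfl fun i _ => congrArg _ (hinv g _ l)

theorem eq_zero_of_d_eq_zero [Nonempty X] {F : (Fin 0 → X) → Λ → ℝ} (hF : d F = 0) : F = 0 := by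
  ext y l
  have h := congrFun (congrFun hF fun _ => Classical.arbitrary X) l
  rwa [d, coboundary_fin_zero _ _ y] at h

theorem comp_mem_cochains {Λ' : Type*} [SMul G Λ'] {F : (Fin n → X) → Λ → ℝ}
    (hF : F ∈ cochains G X Λ n) (φ : Λ' → Λ) (hφ : ∀ (g : G) l, φ (g • l) = g • φ l) :
    (fun x l => F x (φ l)) ∈ cochains G X Λ' n := by
  obtain ⟨⟨C, hC⟩, hinv⟩ := hF
  exact ⟨⟨C, fun x l => hC x _⟩, fun g x l => by simp only [hφ, hinv]⟩

/-- A cocycle on `G¹` is constant in the group variable. -/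
theorem vanishAt_zero [Group G] : VanishAt G G Λ 0 := by
  rintro F ⟨⟨C, hC⟩, hinv⟩ hF
  have hconst (x x' : Fin 1 → G) (l : Λ) : F x l = F x' l :=
    eq_of_coboundary_eq_zero (funext fun x => congrFun (congrFun hF x) l) x x'
  refine ⟨fun _ l => F 1 l, ⟨⟨C, fun _ l => hC 1 l⟩, fun g _ l => ?_⟩, ?_⟩
  · show F 1 (g • l) = F 1 l
    rw [hconst 1 (g • fun _ => g⁻¹), hinv, hconst]
  · ext x l
    rw [d, coboundary_fin_zero _ x Fin.elim0, hconst]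

/-- Cone on the point `κ l`. -/
theorem vanishAt_of_equivariant (κ : Λ → X) (hκ : ∀ (g : G) l, κ (g • l) = g • κ l) (q : ℕ) :
    VanishAt G X Λ q := by
  rintro F ⟨⟨C, hC⟩, hinv⟩ hF
  refine ⟨fun x l => F (Fin.cons (κ l) x) l, ⟨⟨C, fun x l => hC _ l⟩, fun g x l => ?_⟩, ?_⟩
  · simp only [hκ, ← smul_cons, hinv]
  · ext x l
    simp only [d, coboundary_cons (F · l)]
    rw [show coboundary (q + 1) (F · l) (Fin.cons (κ l) x) = 0 from congrFun (congrFun hF _) l]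
    ring

theorem hbVanishAt_of_vanishAt_unit [Group G] {q : ℕ} (h : VanishAt G G Unit q) :
    HbVanishAt G q := by
  rintro c hinv ⟨C, hC⟩ hc
  obtain ⟨F, ⟨⟨C', hC'⟩, hF⟩, hdF⟩ := h (fun x _ => c x)
    ⟨⟨C, fun x _ => hC x⟩, fun g x _ => hinv g x⟩ (funext fun x => funext fun _ => congrFun hc x)
  exact ⟨(F · ()), fun g x => hF g x (), ⟨C', (hC' · ())⟩,
    funext fun x => congrFun (congrFun hdF x) ()⟩

end Cochains

section DoubleComplex

variable {G Z Λ : Type*} [Group G] [SMul G Z] [SMul G Λ]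

/-- The double complex on `Gᵖ × Zᵠ × Λ`, with rows the complexes `cochains G G (Zᵠ × Λ)` and
columns the coboundary `dZ` in the `Z`-variables. -/
local notation "DC" p:max q:max => cochains G G ((Fin q → Z) × Λ) p

def dZ {Y : Type*} {q : ℕ} (F : Y → (Fin q → Z) × Λ → ℝ) : Y → (Fin (q + 1) → Z) × Λ → ℝ :=
  fun y zl => coboundary q (fun z => F y (z, zl.2)) zl.1

variable {Y : Type*} {p q : ℕ}

theorem dZ_dZ (F : Y → (Fin q → Z) × Λ → ℝ) : dZ (dZ F) = 0 :=
  funext fun y => funext fun zl => congrFun (coboundary_coboundary fun z => F y (z, zl.2)) zl.1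

theorem dZ_sub (F F' : Y → (Fin q → Z) × Λ → ℝ) : dZ (F - F') = dZ F - dZ F' := by
  ext y zl
  exact congrFun (map_sub (coboundary q) (fun z => F y (z, zl.2)) (fun z => F' y (z, zl.2))) zl.1

theorem d_dZ (F : (Fin p → Y) → (Fin q → Z) × Λ → ℝ) : d (dZ F) = dZ (d F) := by
  ext y zl
  simp only [d, dZ, coboundary_apply, Finset.mul_sum]
  rw [Finset.sum_comm]
  exact Finset.sum_congr rfl fun i _ => Finset.sum_congr rfl fun j _ => by ring

theorem dZ_mem {F : (Fin p → G) → (Fin q → Z) × Λ → ℝ} (hF : F ∈ DC p q) :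
    dZ F ∈ DC p (q + 1) := by
  obtain ⟨⟨C, hC⟩, hinv⟩ := hF
  refine ⟨⟨(q + 1) * C, fun y zl => abs_coboundary_le (fun z => hC y (z, zl.2)) zl.1⟩,
    fun g y zl => ?_⟩
  simp only [dZ, coboundary_apply]
  exact Finset.sum_congr rfl fun i _ => congrArg _ (hinv g y (_, zl.2))

theorem eq_zero_of_dZ_eq_zero [Nonempty Z] {F : Y → (Fin 0 → Z) × Λ → ℝ} (hF : dZ F = 0) :
    F = 0 := by
  ext y zl
  have h := congrFun (congrFun hF y) (fun _ => Classical.arbitrary Z, zl.2)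
  rwa [dZ, coboundary_fin_zero _ _ zl.1] at h

/-- Columns `p ≥ 1` are contractible: cone on the point `u (y 0)`. -/
theorem exists_dZ_eq_of_equivariant (u : G → Z) (hu : ∀ g y, u (g * y) = g • u y)
    {F : (Fin (p + 1) → G) → (Fin (q + 1) → Z) × Λ → ℝ} (hF : F ∈ DC (p + 1) (q + 1))
    (hdF : dZ F = 0) : ∃ S ∈ DC (p + 1) q, dZ S = F := by
  obtain ⟨⟨C, hC⟩, hinv⟩ := hF
  refine ⟨fun y zl => F y (Fin.cons (u (y 0)) zl.1, zl.2), ⟨⟨C, fun y zl => hC _ _⟩,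
    fun g y zl => ?_⟩, ?_⟩
  · simp only [Pi.smul_apply, smul_eq_mul, hu, Prod.smul_fst, Prod.smul_snd, ← smul_cons]
    exact hinv g y (_, zl.2)
  · ext y zl
    simp only [dZ, coboundary_cons (fun z => F y (z, zl.2))]
    rw [show coboundary (q + 1) (fun z => F y (z, zl.2)) (Fin.cons (u (y 0)) zl.1) = 0 from
      congrFun (congrFun hdF y) (_, zl.2)]
    simp

/-- The column `p = 0` is the complex `cochains G Z Λ`. -/
theorem exists_dZ_eq_of_vanishAt (h : VanishAt G Z Λ (q + 1))
    {F : (Fin 0 → G) → (Fin (q + 2) → Z) × Λ → ℝ} (hF : F ∈ DC 0 (q + 2)) (hdF : dZ F = 0) :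
    ∃ S ∈ DC 0 (q + 1), dZ S = F := by
  obtain ⟨⟨C, hC⟩, hinv⟩ := hF
  obtain ⟨V, ⟨⟨C', hC'⟩, hV⟩, hdV⟩ := h (fun z l => F Fin.elim0 (z, l))
    ⟨⟨C, fun z l => hC _ _⟩, fun g z l =>
      (congrArg (F · _) (Subsingleton.elim _ _)).trans (hinv g Fin.elim0 (z, l))⟩
    (funext fun z => funext fun l => congrFun (congrFun hdF Fin.elim0) (z, l))
  refine ⟨fun _ zl => V zl.1 zl.2, ⟨⟨C', fun _ zl => hC' _ _⟩, fun g _ zl => hV g _ _⟩, ?_⟩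
  ext y zl
  rw [Subsingleton.elim y Fin.elim0]
  exact congrFun (congrFun hdV zl.1) zl.2

/-- Up the staircase: write `F = d W₀` by row exactness; `dZ W₀` is again a bicocycle, one column
to the left, and a column primitive of the `W₁` it yields corrects `W₀`. -/
theorem exists_d_eq_of_dZ_eq_zero
    (hrow : ∀ p q, VanishAt G G ((Fin (q + 1) → Z) × Λ) p)
    (hcol : ∀ p q, ∀ F ∈ DC p (q + 2), dZ F = 0 → ∃ S ∈ DC p (q + 1), dZ S = F) (p : ℕ) :
    ∀ q, ∀ F ∈ DC (p + 1) (q + 1), d F = 0 → dZ F = 0 →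
      ∃ W ∈ DC p (q + 1), d W = F ∧ dZ W = 0 := by
  induction p with
  | zero =>
    intro q F hF hdF hdZF
    obtain ⟨W, hW, rfl⟩ := hrow 0 q F hF hdF
    exact ⟨W, hW, rfl, eq_zero_of_d_eq_zero (by rw [d_dZ, hdZF])⟩
  | succ p ih =>
    intro q F hF hdF hdZF
    obtain ⟨W₀, hW₀, rfl⟩ := hrow (p + 1) q F hF hdF
    obtain ⟨W₁, hW₁, hdW₁, hdZW₁⟩ :=
      ih (q + 1) (dZ W₀) (dZ_mem hW₀) (by rw [d_dZ, hdZF]) (dZ_dZ W₀)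
    obtain ⟨S, hS, rfl⟩ := hcol p q W₁ hW₁ hdZW₁
    refine ⟨W₀ - d S, sub_mem hW₀ (d_mem hS), by rw [d_sub, d_d, sub_zero], ?_⟩
    rw [dZ_sub, ← d_dZ, hdW₁, sub_self]

/-- The columns `p ≥ 1` being contractible, exactness of the rows `q ≥ 1` makes the row `q = 0`,
which computes `H^•_b(G; ℓ^∞(Λ))`, as exact as the column `p = 0`, which is `cochains G Z Λ`. -/
theorem vanishAt_of_vanishAt_rows (u : G → Z) (hu : ∀ g y, u (g * y) = g • u y)
    (hrow : ∀ p q, VanishAt G G ((Fin (q + 1) → Z) × Λ) (p + 1))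
    (hcol₀ : ∀ q, VanishAt G Z Λ (q + 1)) (p : ℕ) : VanishAt G G Λ (p + 1) := by
  have : Nonempty Z := ⟨u 1⟩
  have hrow' : ∀ p q, VanishAt G G ((Fin (q + 1) → Z) × Λ) p
    | 0, _ => vanishAt_zero
    | p + 1, q => hrow p q
  have hcol : ∀ p q, ∀ F ∈ DC p (q + 2), dZ F = 0 → ∃ S ∈ DC p (q + 1), dZ S = F
    | 0, q => fun _ => exists_dZ_eq_of_vanishAt (hcol₀ q)
    | p + 1, q => fun _ => exists_dZ_eq_of_equivariant u hu
  intro F hF hdF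
  let F₀ : (Fin (p + 2) → G) → (Fin 0 → Z) × Λ → ℝ := fun y zl => F y zl.2
  have hF₀ : F₀ ∈ DC (p + 2) 0 := comp_mem_cochains hF Prod.snd fun _ _ => rfl
  have hdF₀ : d F₀ = 0 := funext fun y => funext fun zl => congrFun (congrFun hdF y) zl.2
  obtain ⟨W₁, hW₁, hdW₁, hdZW₁⟩ := exists_d_eq_of_dZ_eq_zero hrow' hcol (p + 1) 0 (dZ F₀)
    (dZ_mem hF₀) (by rw [d_dZ, hdF₀]; ext; simp [dZ, coboundary_apply]) (dZ_dZ F₀)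
  obtain ⟨W, hW, rfl⟩ := exists_dZ_eq_of_equivariant u hu hW₁ hdZW₁
  have hdW : d W = F₀ :=
    sub_eq_zero.1 (eq_zero_of_dZ_eq_zero (by rw [dZ_sub, ← d_dZ, hdW₁, sub_self]))
  refine ⟨fun y l => W y (Fin.elim0, l),
    comp_mem_cochains hW _ fun g l => Prod.ext (Subsingleton.elim _ _) rfl, ?_⟩
  ext y l
  exact congrFun (congrFun hdW y) (Fin.elim0, l)

end DoubleComplex

section UniformBound

open scoped ENNReal

variable {G : Type*} {n : ℕ}

local notation "ℓ∞" n:max => lp (fun _ : Fin n → G => ℝ) ∞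

theorem abs_apply_le_norm (f : ℓ∞ n) (x : Fin n → G) : |f x| ≤ ‖f‖ :=
  lp.norm_apply_le_norm ENNReal.top_ne_zero f x

variable [Group G]

theorem _root_.IsInvCochain.coboundary {c : (Fin n → G) → ℝ} (hc : IsInvCochain c) :
    IsInvCochain (coboundary n c) := fun g x => by
  simp only [coboundary_apply]
  exact Finset.sum_congr rfl fun i _ => congrArg _ (hc g _)

def toLp (c : (Fin n → G) → ℝ) {M : ℝ} (hM : ∀ x, |c x| ≤ M) : ℓ∞ n :=
  ⟨c, memℓp_infty ⟨M, Set.forall_mem_range.2 hM⟩⟩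

theorem norm_toLp_le {c : (Fin n → G) → ℝ} {M : ℝ} (hM : ∀ x, |c x| ≤ M) : ‖toLp c hM‖ ≤ M :=
  lp.norm_le_of_forall_le' M hM

noncomputable def coboundaryLp (n : ℕ) : ℓ∞ n →L[ℝ] ℓ∞ (n + 1) :=
  LinearMap.mkContinuous
    { toFun f := toLp (coboundary n f) (abs_coboundary_le (abs_apply_le_norm f))
      map_add' f f' := by ext x; exact congrFun (map_add (coboundary n) (⇑f) (⇑f')) x
      map_smul' r f := by ext x; exact congrFun (map_smul (coboundary n) r (⇑f)) x }
    (n + 1) fun f => norm_toLp_le (abs_coboundary_le (abs_apply_le_norm f))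

theorem coe_coboundaryLp (f : ℓ∞ n) : ⇑(coboundaryLp n f) = coboundary n f := by
  simp [coboundaryLp]
  rfl

variable (G) in
noncomputable def invariantsLp (n : ℕ) : Submodule ℝ (ℓ∞ n) where
  carrier := {f | IsInvCochain (⇑f)}
  add_mem' hf hf' g x := by simp [hf g x, hf' g x]
  zero_mem' _ _ := rfl
  smul_mem' r f hf g x := by simp [hf g x]

theorem isClosed_invariantsLp : IsClosed (invariantsLp G n : Set (ℓ∞ n)) := by
  simp only [invariantsLp, IsInvCochain, Submodule.coe_set_mk, AddSubmonoid.coe_set_mk,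
    AddSubsemigroup.coe_set_mk, Set.ofPred_forall]
  exact isClosed_iInter fun g => isClosed_iInter fun x =>
    isClosed_eq (lp.lipschitzWith_one_eval ∞ _).continuous
      (lp.lipschitzWith_one_eval ∞ x).continuous

variable (G) in
noncomputable def cocyclesLp (n : ℕ) : Submodule ℝ (ℓ∞ (n + 1)) :=
  invariantsLp G (n + 1) ⊓ LinearMap.ker (coboundaryLp (n + 1)).toLinearMap

theorem mem_cocyclesLp {f : ℓ∞ (n + 1)} :
    f ∈ cocyclesLp G n ↔ IsInvCochain ⇑f ∧ coboundary (n + 1) f = 0 := by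
  refine Submodule.mem_inf.trans
    (and_congr Iff.rfl (LinearMap.mem_ker.trans ⟨fun h => ?_, fun h => ?_⟩))
  · rw [← coe_coboundaryLp]
    exact congrArg (⇑) h
  · exact lp.ext ((coe_coboundaryLp f).trans h)

theorem isClosed_cocyclesLp : IsClosed (cocyclesLp G n : Set (ℓ∞ (n + 1))) :=
  isClosed_invariantsLp.inter (coboundaryLp (n + 1)).isClosed_ker

/-- By the open mapping theorem, primitives of bounded cocycles can be chosen with norm
controlled by that of the cocycle. -/
theorem _root_.HbVanishAt.exists_bound {q : ℕ} (h : HbVanishAt G q) :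
    ∃ K : ℝ, ∀ (c : (Fin (q + 1) → G) → ℝ) (M : ℝ), IsInvCochain c → (∀ x, |c x| ≤ M) →
      gcoboundary c = 0 → ∃ b, IsInvCochain b ∧ (∀ x, |b x| ≤ K * M) ∧ gcoboundary b = c := by
  have : CompleteSpace (invariantsLp G q) := isClosed_invariantsLp.completeSpace_coe
  have : CompleteSpace (cocyclesLp G q) := isClosed_cocyclesLp.completeSpace_coe
  let T : invariantsLp G q →L[ℝ] cocyclesLp G q :=
    ((coboundaryLp q).comp (invariantsLp G q).subtypeL).codRestrict _ fun f =>
      mem_cocyclesLp.2 ⟨(coe_coboundaryLp f.1).symm ▸ IsInvCochain.coboundary f.2,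
        (coe_coboundaryLp f.1).symm ▸ coboundary_coboundary _⟩
  have coe_T (f : invariantsLp G q) : ⇑(T f : ℓ∞ (q + 1)) = coboundary q f :=
    coe_coboundaryLp f.1
  have hT : Function.Surjective T := by
    rintro ⟨c, hc⟩
    obtain ⟨hinv, hcoc⟩ := mem_cocyclesLp.1 hc
    obtain ⟨b, hb, ⟨C, hC⟩, hbc⟩ := h c hinv ⟨‖c‖, abs_apply_le_norm c⟩ hcoc
    exact ⟨⟨toLp b hC, hb⟩, Subtype.ext (lp.ext ((coe_T _).trans hbc))⟩
  obtain ⟨K, hK, hpre⟩ := T.exists_preimage_norm_le hT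
  refine ⟨K, fun c M hinv hM hcoc => ?_⟩
  obtain ⟨b, hTb, hnorm⟩ := hpre ⟨toLp c hM, mem_cocyclesLp.2 ⟨hinv, hcoc⟩⟩
  refine ⟨b.1, b.2, fun x => ?_,
    (coe_T b).symm.trans (congrArg (fun f => ⇑(f.1 : ℓ∞ (q + 1))) hTb)⟩
  calc |b.1 x| ≤ ‖b‖ := abs_apply_le_norm b.1 x
    _ ≤ K * ‖toLp c hM‖ := hnorm
    _ ≤ K * M := mul_le_mul_of_nonneg_left (norm_toLp_le hM) hK.le

end UniformBound

section ProdFst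

variable {A B Λ : Type*} [Group A] [Group B] [SMul (A × B) Λ]

local instance : SMul (A × B) A := ⟨fun g a => g.1 * a⟩

/-- Primitives are chosen as a function of the cocycle `F · l` alone, with a bound uniform in `l`;
since `F · l` depends only on the orbit of `l`, they are invariant. -/
theorem vanishAt_fst_of_hbVanishAt {q : ℕ} (hA : HbVanishAt A (q + 1))
    (htriv : ∀ (a : A) (l : Λ), ((a, 1) : A × B) • l = l) : VanishAt (A × B) A Λ (q + 1) := by
  obtain ⟨K, hK⟩ := hA.exists_bound
  choose! P hP using hK
  rintro F ⟨⟨C, hC⟩, hinv⟩ hF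
  have hF_inv (l : Λ) : IsInvCochain (F · l) := fun a x =>
    (congrArg (F _) (htriv a l)).symm.trans (hinv (a, 1) x l)
  have hF_orbit (g : A × B) (l : Λ) : (F · (g • l)) = (F · l) := funext fun x => by
    calc F x (g • l) = F (g • (g⁻¹ • x)) (g • l) := by
          congr 1; ext i; exact (mul_inv_cancel_left g.1 (x i)).symm
      _ = F (g⁻¹ • x) l := hinv _ _ _
      _ = F x l := hF_inv l g.1⁻¹ x
  have hF_coc (l : Λ) : gcoboundary (F · l) = 0 := funext fun x => congrFun (congrFun hF x) l
  have hPF (l : Λ) := hP (F · l) C (hF_inv l) (hC · l) (hF_coc l)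
  refine ⟨fun x l => P (F · l) C x, ⟨⟨K * C, fun x l => (hPF l).2.1 x⟩, fun g x l => ?_⟩, ?_⟩
  · simp only [hF_orbit]
    exact (hPF l).1 g.1 x
  · ext x l
    exact congrFun (hPF l).2.2 x

/-- The double complex with `Z = A`: its rows are contractible through the point `(z 0, κ l)`. -/
theorem vanishAt_prod_of_trivial_left (hA : ∀ q, HbVanishAt A (q + 1)) (κ : Λ → B)
    (hκ : ∀ (g : A × B) l, κ (g • l) = g.2 * κ l)
    (htriv : ∀ (a : A) (l : Λ), ((a, 1) : A × B) • l = l) (q : ℕ) :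
    VanishAt (A × B) (A × B) Λ (q + 1) :=
  vanishAt_of_vanishAt_rows Prod.fst (fun _ _ => rfl)
    (fun _ _ => vanishAt_of_equivariant (fun zl => (zl.1 0, κ zl.2))
      (fun g zl => Prod.ext rfl (hκ g zl.2)) _)
    (fun q => vanishAt_fst_of_hbVanishAt (hA q) htriv) q

end ProdFst

section ProdSnd

variable {A B : Type*} [Group A] [Group B]

local instance : SMul (A × B) B := ⟨fun g b => g.2 * b⟩

theorem vanishAt_snd_of_hbVanishAt {q : ℕ} (hB : HbVanishAt B q) : VanishAt (A × B) B Unit q := by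
  rintro F ⟨⟨C, hC⟩, hinv⟩ hF
  obtain ⟨b, hb, ⟨C', hC'⟩, hbF⟩ := hB (F · ()) (fun β x => hinv (1, β) x ()) ⟨C, (hC · ())⟩
    (funext fun x => congrFun (congrFun hF x) ())
  exact ⟨fun x _ => b x, ⟨⟨C', fun x _ => hC' x⟩, fun g x _ => hb g.2 x⟩,
    funext fun x => funext fun _ => congrFun hbF x⟩

/-- The double complex with `Z = B` and `Λ` a point. -/
theorem _root_.HbVanishAt.prod (hA : ∀ q, HbVanishAt A (q + 1)) (hB : ∀ q, HbVanishAt B (q + 1))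
    (q : ℕ) : HbVanishAt (A × B) (q + 1) := by
  have hrow (p q : ℕ) : VanishAt (A × B) (A × B) ((Fin (q + 1) → B) × Unit) (p + 1) :=
    vanishAt_prod_of_trivial_left hA (fun zl => zl.1 0) (fun _ _ => rfl)
      (fun _ _ => Prod.ext (funext fun _ => one_mul _) rfl) p
  exact hbVanishAt_of_vanishAt_unit
    (vanishAt_of_vanishAt_rows Prod.snd (fun _ _ => rfl) hrow
      (fun q => vanishAt_snd_of_hbVanishAt (hB q)) q)

end ProdSnd

end BoundedCohomology

theorem HbVanishAt.of_subsingleton {G : Type*} [Group G] [Subsingleton G] (q : ℕ) :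
    HbVanishAt G q :=
  BoundedCohomology.hbVanishAt_of_vanishAt_unit <|
    BoundedCohomology.vanishAt_of_equivariant (fun _ => 1) (fun _ _ => Subsingleton.elim _ _) q

theorem HbVanishAt.of_mulEquiv {G H : Type*} [Group G] [Group H] (e : G ≃* H) {q : ℕ}
    (h : HbVanishAt G q) : HbVanishAt H q := by
  rintro c hinv ⟨C, hC⟩ hc
  obtain ⟨b, hb, ⟨C', hC'⟩, hbc⟩ := h (fun x => c (e ∘ x))
    (fun g x => by simpa [Function.comp_def] using hinv (e g) (e ∘ x)) ⟨C, fun x => hC _⟩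
    (funext fun x => congrFun hc (e ∘ x))
  refine ⟨fun x => b (e.symm ∘ x), fun g x => ?_, ⟨C', fun x => hC' _⟩,
    funext fun x => (congrFun hbc (e.symm ∘ x)).trans (by simp [Function.comp_def])⟩
  simpa [Function.comp_def] using hb (e.symm g) (e.symm ∘ x)

def Fin.consMulEquiv {n : ℕ} (G : Fin (n + 1) → Type*) [∀ i, Group (G i)] :
    G 0 × (∀ i : Fin n, G i.succ) ≃* ∀ i, G i :=
  { Fin.consEquiv G with
    map_mul' _ _ := funext fun i => Fin.cases rfl (fun _ => rfl) i }

/-- a finite direct product of boundedly acyclic groups is boundedly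
acyclic. -/
theorem finite_product_boundedly_acyclic {n : ℕ} (G : Fin n → Type*)
    [∀ i, Group (G i)] (h : ∀ i, ∀ q : ℕ, 0 < q → HbVanishAt (G i) q) :
    ∀ q : ℕ, 0 < q → HbVanishAt (∀ i, G i) q := by
  induction n with
  | zero => exact fun q _ => HbVanishAt.of_subsingleton q
  | succ n ih =>
    intro q hq
    obtain ⟨q, rfl⟩ := Nat.exists_eq_add_one_of_ne_zero hq.ne'
    exact (HbVanishAt.prod (fun q => h 0 (q + 1) q.succ_pos)
      (fun q => ih _ (fun i => h i.succ) (q + 1) q.succ_pos) q).of_mulEquiv (Fin.consMulEquiv G)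
end

section
/- Let X_• be a semi-simplicial set with H^n_b(X_•) = 0 for some n ≥ 1. Then the n-th vanishing modulus of X_•, defined as sup over norm-one bounded n-cocycles c of the infimum of ‖b‖_∞ over bounded (n−1)-cochains b with db = c, is finite. -/
/-- The alternating-sum coboundary of a semi-simplicial set with `n`-simplices `X n` and
face maps `d`. -/
noncomputable def ssCoboundary {X : ℕ → Type*}
    (d : ∀ n : ℕ, Fin (n + 2) → X (n + 1) → X n) (n : ℕ)
    (c : X n → ℝ) : X (n + 1) → ℝ :=
  fun σ => ∑ i : Fin (n + 2), (-1 : ℝ) ^ (i : ℕ) * c (d n i σ)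

open scoped ENNReal lp

/-! The coboundaries extend to bounded operators `δₘ : ℓ^∞(Xₘ) → ℓ^∞(Xₘ₊₁)`. The hypothesis says
that the closed subspace `ker δₙ₊₁` lies in the range of `δₙ`, so `δₙ`, restricted to the preimage
of `ker δₙ₊₁`, is a surjection between Banach spaces; the open mapping theorem then yields
primitives whose norm is bounded by a fixed multiple of the norm of the cocycle. -/

theorem ContinuousLinearMap.exists_preimage_norm_le_of_le_range
    {𝕜 E F : Type*} [NontriviallyNormedField 𝕜]
    [NormedAddCommGroup E] [NormedSpace 𝕜 E] [CompleteSpace E]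
    [NormedAddCommGroup F] [NormedSpace 𝕜 F] [CompleteSpace F]
    (T : E →L[𝕜] F) {Z : Submodule 𝕜 F} (hZ : IsClosed (Z : Set F))
    (hZT : Z ≤ T.range) :
    ∃ C > 0, ∀ z ∈ Z, ∃ x, T x = z ∧ ‖x‖ ≤ C * ‖z‖ := by
  let W := Z.comap (T : E →ₗ[𝕜] F)
  have : CompleteSpace Z := hZ.completeSpace_coe
  have : CompleteSpace W := (hZ.preimage T.continuous).completeSpace_coe
  let S : W →L[𝕜] Z := (T.comp W.subtypeL).codRestrict Z fun w => w.2
  have hS : Function.Surjective S := by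
    rintro ⟨z, hz⟩
    obtain ⟨x, rfl⟩ := hZT hz
    exact ⟨⟨x, hz⟩, rfl⟩
  obtain ⟨C, hC, hpre⟩ := S.exists_preimage_norm_le hS
  refine ⟨C, hC, fun z hz => ?_⟩
  obtain ⟨w, hw, hnorm⟩ := hpre ⟨z, hz⟩
  exact ⟨w, congrArg Subtype.val hw, hnorm⟩

namespace lp

variable {𝕜 E : Type*} [NormedField 𝕜] [NormedAddCommGroup E] [NormedSpace 𝕜 E]

theorem memℓp_infty_comp {X Y : Type*} (g : Y → X) (f : ℓ^∞(X, E)) : Memℓp (f ∘ g) ∞ :=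
  memℓp_infty ((memℓp_infty_iff.mp f.2).mono (Set.range_comp_subset_range g fun x => ‖f x‖))

variable (𝕜 E) in
noncomputable def compCLM {X Y : Type*} (g : Y → X) : ℓ^∞(X, E) →L[𝕜] ℓ^∞(Y, E) :=
  LinearMap.mkContinuous
    { toFun f := ⟨f ∘ g, memℓp_infty_comp g f⟩
      map_add' _ _ := rfl
      map_smul' _ _ := rfl }
    1 fun f => by
      rw [one_mul]
      exact norm_le_of_forall_le (norm_nonneg f) fun y =>
        norm_apply_le_norm ENNReal.top_ne_zero f (g y)

@[simp]
theorem coe_compCLM {X Y : Type*} (g : Y → X) (f : ℓ^∞(X, E)) :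
    ⇑(compCLM 𝕜 E g f) = f ∘ g :=
  rfl

end lp

theorem IsBddFun.memℓp {α : Type*} {f : α → ℝ} (hf : IsBddFun f) : Memℓp f ∞ := by
  obtain ⟨C, hC⟩ := hf
  exact memℓp_infty ⟨C, by rintro _ ⟨x, rfl⟩; exact hC x⟩

section Coboundary

variable {X : ℕ → Type*} (d : ∀ n : ℕ, Fin (n + 2) → X (n + 1) → X n)

noncomputable def ssCoboundaryCLM (m : ℕ) : ℓ^∞(X m, ℝ) →L[ℝ] ℓ^∞(X (m + 1), ℝ) :=
  ∑ i : Fin (m + 2), (-1 : ℝ) ^ (i : ℕ) • lp.compCLM ℝ ℝ (d m i)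

@[simp]
theorem coe_ssCoboundaryCLM (m : ℕ) (f : ℓ^∞(X m, ℝ)) :
    ⇑(ssCoboundaryCLM d m f) = ssCoboundary d m f := by
  ext σ
  simp only [ssCoboundaryCLM, FunLike.coe_sum, Finset.sum_apply, lp.coeFn_sum]
  rfl

theorem ker_ssCoboundaryCLM_succ_le_range {n : ℕ}
    (hvan : ∀ c : X (n + 1) → ℝ, IsBddFun c → ssCoboundary d (n + 1) c = 0 →
      ∃ b : X n → ℝ, IsBddFun b ∧ ssCoboundary d n b = c) :
    (ssCoboundaryCLM d (n + 1)).ker ≤ (ssCoboundaryCLM d n).range := by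
  intro c hc
  have hbdd : IsBddFun c := ⟨‖c‖, fun σ => lp.norm_apply_le_norm ENNReal.top_ne_zero c σ⟩
  have hcoc : ssCoboundary d (n + 1) c = 0 :=
    (coe_ssCoboundaryCLM d _ c).symm.trans
      (congrArg (⇑) (hc : ssCoboundaryCLM d (n + 1) c = 0))
  obtain ⟨b, hb, hdb⟩ := hvan c hbdd hcoc
  exact ⟨⟨b, hb.memℓp⟩, lp.ext (by simpa using hdb)⟩

end Coboundary

/-- if `X_•` is a semi-simplicial set with `H^n_b(X_•) = 0` for some `n ≥ 1`
(every bounded `n`-cocycle is the coboundary of a bounded `(n-1)`-cochain), then the `n`-th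
vanishing modulus of `X_•` is finite: there is a uniform constant `C` such that every
bounded `n`-cocycle of sup-norm at most `1` is the coboundary of a bounded cochain of
sup-norm at most `C`.  (Stated with `n` replaced by `n+1 ≥ 1`.) -/
theorem vanishing_modulus_finite {X : ℕ → Type*}
    (d : ∀ n : ℕ, Fin (n + 2) → X (n + 1) → X n) (n : ℕ)
    (hvan : ∀ c : X (n + 1) → ℝ, IsBddFun c → ssCoboundary d (n + 1) c = 0 →
      ∃ b : X n → ℝ, IsBddFun b ∧ ssCoboundary d n b = c) :
    ∃ C : ℝ, ∀ c : X (n + 1) → ℝ, (∀ σ, |c σ| ≤ 1) → ssCoboundary d (n + 1) c = 0 →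
      ∃ b : X n → ℝ, (∀ τ, |b τ| ≤ C) ∧ ssCoboundary d n b = c := by
  obtain ⟨C, hC, hpre⟩ := (ssCoboundaryCLM d n).exists_preimage_norm_le_of_le_range
    (ssCoboundaryCLM d (n + 1)).isClosed_ker (ker_ssCoboundaryCLM_succ_le_range d hvan)
  refine ⟨C, fun c hc hcoc => ?_⟩
  let c' : ℓ^∞(X (n + 1), ℝ) := ⟨c, IsBddFun.memℓp ⟨1, hc⟩⟩
  have hc'_norm : ‖c'‖ ≤ 1 := lp.norm_le_of_forall_le zero_le_one hc
  have hc'_ker : c' ∈ (ssCoboundaryCLM d (n + 1)).ker :=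
    lp.ext ((coe_ssCoboundaryCLM d _ c').trans hcoc)
  obtain ⟨b, hdb, hb⟩ := hpre c' hc'_ker
  refine ⟨b, fun τ => ?_, by simpa using congrArg (⇑) hdb⟩
  calc |b τ| ≤ ‖b‖ := lp.norm_apply_le_norm ENNReal.top_ne_zero b τ
    _ ≤ C * ‖c'‖ := hb
    _ ≤ C := mul_le_of_le_one_right hC.le hc'_norm
end

section
/- Let G be a group acting on a set X with a set J ⊆ X of orbit representatives and stabilizers G_j for j ∈ J. Fix q > 0 and suppose each stabilizer G_j satisfies H^q_b(G_j; ℝ) = 0 with q-th vanishing modulus bounded by a uniform constant C independent of j. Then H^q_b(G; ℓ^∞(X)) = 0, where G acts on ℓ^∞(X) via the action on X. -/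
/-- A bounded function of two arguments. -/
def IsBddFun₂ {α β : Type*} (c : α → β → ℝ) : Prop := ∃ C : ℝ, ∀ x y, |c x y| ≤ C

/-- A homogeneous cochain with values in `ℓ^∞(X)` is `G`-equivariant. -/
def IsEquivCochain {G X : Type*} [Group G] [MulAction G X] {n : ℕ}
    (c : (Fin n → G) → X → ℝ) : Prop :=
  ∀ (g : G) (x : Fin n → G) (v : X), c (fun i => g * x i) (g • v) = c x v

/-- The simplicial coboundary on homogeneous cochains with values in `ℓ^∞(X)`. -/
noncomputable def gcoboundaryC {G X : Type*} [Group G] {n : ℕ}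
    (c : (Fin n → G) → X → ℝ) : (Fin (n + 1) → G) → X → ℝ :=
  fun x v => ∑ i : Fin (n + 1), (-1 : ℝ) ^ (i : ℕ) * c (x ∘ i.succAbove) v

/-!
An equivariant `ℓ^∞(X)`-valued cochain is the same as the family of real cochains `c(·, j)`,
`j ∈ J`, each invariant under the stabilizer `G_j`; primitives of these that are
`G_j`-invariant and bounded uniformly in `j` glue back to a bounded equivariant primitive.

For a subgroup `K` choose a `K`-equivariant map `p : G → K`. The restriction to `K` of a
`K`-invariant cocycle `F` has a primitive bounded by `C ‖F‖`, whose pullback along `p` is a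
primitive of `F ∘ p`. The prism operator of `p` is a chain homotopy between `p^*` and the
identity, so it provides a `K`-invariant primitive of `F ∘ p - F` bounded by `q ‖F‖`.
-/

section Coboundary

variable {G : Type*} [Group G]

theorem gcoboundary_comp {H : Type*} [Group H] {n : ℕ} (φ : H → G) (F : (Fin n → G) → ℝ)
    (y : Fin (n + 1) → H) : gcoboundary (fun z => F (φ ∘ z)) y = gcoboundary F (φ ∘ y) :=
  rfl

theorem gcoboundary_const_mul {n : ℕ} (a : ℝ) (F : (Fin n → G) → ℝ) :
    gcoboundary (fun y => a * F y) = fun y => a * gcoboundary F y := by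
  funext y
  simp only [gcoboundary, Finset.mul_sum]
  exact Finset.sum_congr rfl fun _ _ => by ring

theorem gcoboundary_sub {n : ℕ} (F F' : (Fin n → G) → ℝ) :
    gcoboundary (fun y => F y - F' y) = fun y => gcoboundary F y - gcoboundary F' y := by
  funext y
  simp only [gcoboundary, ← Finset.sum_sub_distrib]
  exact Finset.sum_congr rfl fun _ _ => by ring

end Coboundary

namespace Prism

variable {S : Type*}

def deleteAt (k : ℕ) (x : ℕ → S) : ℕ → S := fun m => if m < k then x m else x (m + 1)

/-- `(x₀, …, xᵢ, p xᵢ, p xᵢ₊₁, …)` -/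
def prismTuple (p : S → S) (i : ℕ) (x : ℕ → S) : ℕ → S :=
  fun m => if m ≤ i then x m else p (x (m - 1))

noncomputable def coboundary (n : ℕ) (F : (ℕ → S) → ℝ) : (ℕ → S) → ℝ :=
  fun x => ∑ k ∈ Finset.range n, (-1 : ℝ) ^ k * F (deleteAt k x)

noncomputable def homotopy (p : S → S) (n : ℕ) (F : (ℕ → S) → ℝ) : (ℕ → S) → ℝ :=
  fun x => ∑ i ∈ Finset.range n, (-1 : ℝ) ^ i * F (prismTuple p i x)

def DependsBelow (n : ℕ) (F : (ℕ → S) → ℝ) : Prop :=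
  ∀ x y : ℕ → S, (∀ m < n, x m = y m) → F x = F y

noncomputable def face (p : S → S) (F : (ℕ → S) → ℝ) (x : ℕ → S) (i k : ℕ) : ℝ :=
  (-1) ^ i * ((-1) ^ k * F (deleteAt k (prismTuple p i x)))

variable (p : S → S)

lemma deleteAt_prismTuple_succ_of_le (x : ℕ → S) {i k : ℕ} (hk : k ≤ i) :
    deleteAt k (prismTuple p (i + 1) x) = prismTuple p i (deleteAt k x) := by
  funext m
  simp only [deleteAt, prismTuple]
  split_ifs <;> first | rfl | omega | (congr 2; omega)

lemma deleteAt_succ_prismTuple_of_lt (x : ℕ → S) {i k : ℕ} (hk : i < k) :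
    deleteAt (k + 1) (prismTuple p i x) = prismTuple p i (deleteAt k x) := by
  funext m
  simp only [deleteAt, prismTuple]
  split_ifs <;> first | rfl | omega | (congr 2; omega)

lemma deleteAt_succ_prismTuple_succ (x : ℕ → S) (i : ℕ) :
    deleteAt (i + 1) (prismTuple p (i + 1) x) = deleteAt (i + 1) (prismTuple p i x) := by
  funext m
  simp only [deleteAt, prismTuple]
  split_ifs <;> first | rfl | omega

lemma deleteAt_zero_prismTuple_zero (x : ℕ → S) : deleteAt 0 (prismTuple p 0 x) = p ∘ x := by
  funext m
  simp [deleteAt, prismTuple]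

lemma deleteAt_succ_prismTuple_self_of_le (x : ℕ → S) {n m : ℕ} (hm : m ≤ n) :
    deleteAt (n + 1) (prismTuple p n x) m = x m := by
  simp only [deleteAt, prismTuple]
  rw [if_pos (by omega), if_pos hm]

theorem DependsBelow.homotopy {n : ℕ} {F : (ℕ → S) → ℝ} (hF : DependsBelow (n + 1) F) :
    DependsBelow n (homotopy p n F) := fun x y h =>
  Finset.sum_congr rfl fun i hi => congrArg _ <| hF _ _ fun m hm => by
    rw [Finset.mem_range] at hi
    simp only [prismTuple]
    split_ifs
    · exact h m (by omega)
    · rw [h (m - 1) (by omega)]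

/-- Each term `prismTuple p i (deleteAt k x)` of `d h` is a face of a prism over `x` other than
its two seam faces. -/
theorem coboundary_homotopy_eq (n : ℕ) (F : (ℕ → S) → ℝ) (x : ℕ → S) :
    coboundary (n + 1) (homotopy p n F) x = -∑ i ∈ Finset.range n,
      (∑ k ∈ Finset.range (i + 1), face p F x (i + 1) k
        + ∑ k ∈ Finset.Ico (i + 2) (n + 2), face p F x i k) := by
  have low : ∀ i, ∑ k ∈ Finset.range (i + 1), face p F x (i + 1) k
      = -∑ k ∈ Finset.range (i + 1), (-1) ^ i * ((-1) ^ k * F (prismTuple p i (deleteAt k x))) :=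
    fun i => by
      rw [← Finset.sum_neg_distrib]
      refine Finset.sum_congr rfl fun k hk => ?_
      rw [face, deleteAt_prismTuple_succ_of_le p x (Finset.mem_range_succ_iff.mp hk)]
      ring
  have high : ∀ i, ∑ k ∈ Finset.Ico (i + 2) (n + 2), face p F x i k
      = -∑ k ∈ Finset.Ico (i + 1) (n + 1),
          (-1) ^ i * ((-1) ^ k * F (prismTuple p i (deleteAt k x))) :=
    fun i => by
      rw [← Finset.sum_neg_distrib, ← Finset.sum_Ico_add' _ (i + 1) (n + 1) 1]
      refine Finset.sum_congr rfl fun k hk => ?_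
      rw [face, deleteAt_succ_prismTuple_of_lt p x (by simp at hk; omega)]
      ring
  simp only [low, high, coboundary, homotopy, Finset.mul_sum]
  rw [Finset.sum_comm, ← Finset.sum_neg_distrib]
  refine Finset.sum_congr rfl fun i hi => ?_
  rw [← Finset.sum_range_add_sum_Ico _ (show i + 1 ≤ n + 1 by simp at hi; omega)]
  simp only [neg_add, neg_neg]
  exact congrArg₂ _ (Finset.sum_congr rfl fun _ _ => by ring)
    (Finset.sum_congr rfl fun _ _ => by ring)

/-- The two seam faces of each prism cancel in pairs along the telescope from `F (p ∘ x)` to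
`F x`. -/
theorem homotopy_coboundary_eq (n : ℕ) {F : (ℕ → S) → ℝ} (hF : DependsBelow (n + 1) F)
    (x : ℕ → S) :
    homotopy p (n + 1) (coboundary (n + 2) F) x = ∑ i ∈ Finset.range (n + 1),
      (∑ k ∈ Finset.range i, face p F x i k + ∑ k ∈ Finset.Ico (i + 2) (n + 2), face p F x i k)
        + (F (p ∘ x) - F x) := by
  set T : ℕ → ℝ := fun i => F (deleteAt i (prismTuple p i x))
  have seam : ∀ i, face p F x i i + face p F x i (i + 1) = T i - T (i + 1) := fun i => by
    have hsq : ((-1 : ℝ) ^ i) ^ 2 = 1 := by rw [← pow_mul, pow_mul', neg_one_sq, one_pow]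
    simp only [face, T, deleteAt_succ_prismTuple_succ]
    linear_combination (F (deleteAt i (prismTuple p i x))
      - F (deleteAt (i + 1) (prismTuple p i x))) * hsq
  have hT0 : T 0 = F (p ∘ x) := congrArg F (deleteAt_zero_prismTuple_zero p x)
  have hTn : T (n + 1) = F x := by
    simp only [T, deleteAt_succ_prismTuple_succ]
    exact hF _ _ fun m hm => deleteAt_succ_prismTuple_self_of_le p x (Nat.lt_succ_iff.mp hm)
  rw [← hT0, ← hTn, ← Finset.sum_range_sub', ← Finset.sum_add_distrib]
  refine Finset.sum_congr rfl fun i hi => ?_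
  rw [← seam]
  simp only [coboundary, Finset.mul_sum]
  rw [← Finset.sum_range_add_sum_Ico _ (show i + 2 ≤ n + 2 by simp at hi; omega),
    Finset.sum_range_succ, Finset.sum_range_succ]
  simp only [face]
  ring

theorem coboundary_homotopy_add_homotopy_coboundary (n : ℕ) {F : (ℕ → S) → ℝ}
    (hF : DependsBelow (n + 1) F) (x : ℕ → S) :
    coboundary (n + 1) (homotopy p n F) x + homotopy p (n + 1) (coboundary (n + 2) F) x
      = F (p ∘ x) - F x := by
  rw [coboundary_homotopy_eq, homotopy_coboundary_eq p n hF, Finset.sum_add_distrib,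
    Finset.sum_add_distrib, Finset.sum_range_succ' (fun i => ∑ k ∈ Finset.range i, face p F x i k),
    Finset.sum_range_succ (fun i => ∑ k ∈ Finset.Ico (i + 2) (n + 2), face p F x i k)]
  simp only [Finset.range_zero, Finset.Ico_self, Finset.sum_empty]
  ring

theorem coboundary_homotopy_of_cocycle (n : ℕ) {F : (ℕ → S) → ℝ} (hF : DependsBelow (n + 1) F)
    (hcoc : ∀ y, coboundary (n + 2) F y = 0) (x : ℕ → S) :
    coboundary (n + 1) (homotopy p n F) x = F (p ∘ x) - F x := by
  simpa [homotopy, hcoc] using coboundary_homotopy_add_homotopy_coboundary p n hF x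

theorem deleteAt_succAbove {n : ℕ} (x : ℕ → S) (k : Fin (n + 1)) (j : Fin n) :
    deleteAt k x j = x (k.succAbove j) := by
  by_cases h : (j : ℕ) < k
  · rw [Fin.succAbove_of_castSucc_lt _ _ (by rwa [Fin.lt_def])]
    simp [deleteAt, h]
  · rw [Fin.succAbove_of_le_castSucc _ _ (by rw [Fin.le_def]; simpa using not_lt.mp h)]
    simp [deleteAt, h]

theorem coboundary_eq_gcoboundary {G : Type*} [Group G] {n : ℕ} (Φ : (ℕ → G) → ℝ)
    (Ψ : (Fin n → G) → ℝ) (hΦ : ∀ z, Φ z = Ψ fun i => z i) (x : ℕ → G) :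
    coboundary (n + 1) Φ x = gcoboundary Ψ fun i => x i := by
  rw [coboundary, gcoboundary, ← Fin.sum_univ_eq_sum_range]
  refine Finset.sum_congr rfl fun k _ => congrArg _ ?_
  rw [hΦ]
  exact congrArg Ψ (funext fun j => deleteAt_succAbove x k j)

theorem dependsBelow_restrict {n : ℕ} (F : (Fin n → S) → ℝ) :
    DependsBelow n fun z => F fun i => z i := fun _ _ h =>
  congrArg F (funext fun i => h i i.isLt)

end Prism

section Homotopy

variable {G : Type*} [Group G] {n : ℕ}

/-- The padding value `1` is never read: `Prism.homotopy p n` only looks at the first `n`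
coordinates. -/
def padOne (y : Fin n → G) : ℕ → G := fun m => if h : m < n then y ⟨m, h⟩ else 1

theorem padOne_of_lt (y : Fin n → G) {m : ℕ} (h : m < n) : padOne y m = y ⟨m, h⟩ :=
  dif_pos h

theorem padOne_restrict (y : Fin n → G) : (fun i : Fin n => padOne y i) = y :=
  funext fun i => padOne_of_lt y i.isLt

noncomputable def gprism (p : G → G) (F : (Fin (n + 1) → G) → ℝ) : (Fin n → G) → ℝ :=
  fun y => Prism.homotopy p n (fun z => F fun i => z i) (padOne y)

theorem gcoboundary_gprism_of_cocycle (p : G → G) {F : (Fin (n + 1) → G) → ℝ}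
    (hF : gcoboundary F = 0) (y : Fin (n + 1) → G) :
    gcoboundary (gprism p F) y = F (p ∘ y) - F y := by
  set Fℕ : (ℕ → G) → ℝ := fun z => F fun i => z i
  have hdep : Prism.DependsBelow (n + 1) Fℕ := Prism.dependsBelow_restrict F
  have hcoc : ∀ z, Prism.coboundary (n + 2) Fℕ z = 0 := fun z => by
    rw [Prism.coboundary_eq_gcoboundary Fℕ F fun _ => rfl, hF, Pi.zero_apply]
  have hrestrict : ∀ z : ℕ → G, Prism.homotopy p n Fℕ z = gprism p F fun i => z i :=
    fun z => hdep.homotopy p _ _ fun m hm => by rw [padOne_of_lt _ hm]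
  calc gcoboundary (gprism p F) y
      = Prism.coboundary (n + 1) (Prism.homotopy p n Fℕ) (padOne y) := by
        rw [Prism.coboundary_eq_gcoboundary _ _ hrestrict, padOne_restrict]
    _ = Fℕ (p ∘ padOne y) - Fℕ (padOne y) :=
        Prism.coboundary_homotopy_of_cocycle p n hdep hcoc _
    _ = F (p ∘ y) - F y := by
        simp only [Fℕ, Function.comp_def, padOne_of_lt _ (Fin.is_lt _)]

theorem gprism_mul_left {p : G → G} {s : G} (hp : ∀ g, p (s * g) = s * p g)
    {F : (Fin (n + 1) → G) → ℝ} (hF : ∀ y, F (fun i => s * y i) = F y) (y : Fin n → G) :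
    gprism p F (fun i => s * y i) = gprism p F y := by
  have hprism : ∀ i (z : ℕ → G), Prism.prismTuple p i (fun m => s * z m)
      = fun m => s * Prism.prismTuple p i z m := fun i z => by
    funext m
    simp only [Prism.prismTuple]
    split_ifs
    · rfl
    · exact hp _
  calc gprism p F (fun i => s * y i)
      = Prism.homotopy p n (fun z => F fun i => z i) (fun m => s * padOne y m) :=
        (Prism.dependsBelow_restrict F).homotopy p _ _ fun m hm => by simp only [padOne_of_lt _ hm]
    _ = gprism p F y := by
        refine Finset.sum_congr rfl fun i _ => ?_
        rw [hprism]
        exact congrArg _ (hF _)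

theorem abs_gprism_le (p : G → G) {F : (Fin (n + 1) → G) → ℝ} {M : ℝ} (hF : ∀ y, |F y| ≤ M)
    (y : Fin n → G) : |gprism p F y| ≤ n * M := by
  unfold gprism Prism.homotopy
  refine (Finset.abs_sum_le_sum_abs _ _).trans ?_
  calc _ ≤ ∑ _i ∈ Finset.range n, M := Finset.sum_le_sum fun i _ => by simpa using hF _
    _ = n * M := by simp

end Homotopy

section Subgroup

variable {G : Type*} [Group G]

theorem Subgroup.exists_equivariant_map_into (K : Subgroup G) :
    ∃ p : G → G, (∀ g, p g ∈ K) ∧ ∀ s ∈ K, ∀ g, p (s * g) = s * p g := by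
  let r : G → G := fun g => (Quotient.mk (QuotientGroup.rightRel K) g).out
  have hr : ∀ s ∈ K, ∀ g, r (s * g) = r g := fun s hs g => by
    refine congrArg Quotient.out (Quotient.sound (QuotientGroup.rightRel_apply.mpr ?_))
    simpa using K.inv_mem hs
  refine ⟨fun g => g * (r g)⁻¹, fun g => ?_, fun s hs g => by simp only [hr s hs, mul_assoc]⟩
  exact QuotientGroup.rightRel_apply.mp (Quotient.mk_out (s := QuotientGroup.rightRel K) g)

def HasVanishingModulusLE (H : Type*) [Group H] (q : ℕ) (C : ℝ) : Prop :=
  ∀ c : (Fin (q + 1) → H) → ℝ, IsInvCochain c → gcoboundary c = 0 → (∀ x, |c x| ≤ 1) →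
    ∃ b : (Fin q → H) → ℝ, IsInvCochain b ∧ gcoboundary b = c ∧ ∀ y, |b y| ≤ C

theorem HasVanishingModulusLE.exists_primitive {H : Type*} [Group H] {q : ℕ} {C M : ℝ}
    (hH : HasVanishingModulusLE H q C) (hM : 0 < M) {c : (Fin (q + 1) → H) → ℝ}
    (hinv : IsInvCochain c) (hcoc : gcoboundary c = 0) (hbd : ∀ x, |c x| ≤ M) :
    ∃ b : (Fin q → H) → ℝ, IsInvCochain b ∧ gcoboundary b = c ∧ ∀ y, |b y| ≤ M * C := by
  obtain ⟨b, hbinv, hbc, hbC⟩ := hH (fun x => M⁻¹ * c x)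
    (fun g x => congrArg _ (hinv g x))
    (by rw [gcoboundary_const_mul, hcoc]; funext; simp)
    (fun x => by rw [abs_mul, abs_inv, abs_of_pos hM]; exact inv_mul_le_one_of_le₀ (hbd x) hM.le)
  refine ⟨fun y => M * b y, fun g y => congrArg _ (hbinv g y), ?_, fun y => ?_⟩
  · rw [gcoboundary_const_mul, hbc]
    funext x
    field_simp
  · rw [abs_mul, abs_of_pos hM]
    exact mul_le_mul_of_nonneg_left (hbC y) hM.le

theorem exists_invariant_primitive_of_subgroup {q : ℕ} {C M : ℝ} (K : Subgroup G)
    (hK : HasVanishingModulusLE K q C) (hM : 0 < M) {F : (Fin (q + 1) → G) → ℝ}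
    (hinv : ∀ s ∈ K, ∀ y, F (fun i => s * y i) = F y) (hcoc : gcoboundary F = 0)
    (hbd : ∀ y, |F y| ≤ M) :
    ∃ B : (Fin q → G) → ℝ, (∀ s ∈ K, ∀ y, B (fun i => s * y i) = B y) ∧
      gcoboundary B = F ∧ ∀ y, |B y| ≤ M * C + q * M := by
  obtain ⟨p, hpK, hp⟩ := K.exists_equivariant_map_into
  let pK : G → K := fun g => ⟨p g, hpK g⟩
  obtain ⟨b, hbinv, hbc, hbC⟩ := hK.exists_primitive (c := fun z => F (Subtype.val ∘ z)) hM
    (fun s z => hinv s s.2 _)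
    (funext fun z => (gcoboundary_comp Subtype.val F z).trans (congrFun hcoc _))
    (fun z => hbd _)
  refine ⟨fun y => b (pK ∘ y) - gprism p F y, fun s hs y => ?_, ?_, fun y => ?_⟩
  · have hpKs : (fun i => pK (s * y i)) = fun i => (⟨s, hs⟩ : K) * pK (y i) :=
      funext fun i => Subtype.ext (hp s hs (y i))
    simp only [Function.comp_def, hpKs, gprism_mul_left (hp s hs) (hinv s hs)]
    rw [hbinv]
  · rw [gcoboundary_sub]
    funext y
    rw [gcoboundary_comp pK b y, hbc, gcoboundary_gprism_of_cocycle p hcoc]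
    simp [pK, Function.comp_def]
  · calc |b (pK ∘ y) - gprism p F y| ≤ |b (pK ∘ y)| + |gprism p F y| := abs_sub _ _
      _ ≤ M * C + q * M := add_le_add (hbC _) (abs_gprism_le p hbd y)

end Subgroup

section OrbitRepresentatives

variable {G X : Type*} [Group G] [MulAction G X]

theorem exists_orbit_rep_fun {J : Set X}
    (hreps : ∀ x : X, ∃! j : X, j ∈ J ∧ x ∈ MulAction.orbit G j) :
    ∃ (r : X → X) (γ : X → G), (∀ v, r v ∈ J) ∧ (∀ v, γ v • r v = v) ∧
      ∀ (g : G) v, r (g • v) = r v := by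
  choose r hr hr_unique using hreps
  choose γ hγ using fun v => MulAction.mem_orbit_iff.mp (hr v).2
  refine ⟨r, γ, fun v => (hr v).1, hγ, fun g v => (hr_unique (g • v) (r v) ⟨(hr v).1, ?_⟩).symm⟩
  exact MulAction.mem_orbit_iff.mpr ⟨g * γ v, by rw [mul_smul, hγ]⟩

theorem exists_equivariant_primitive_of_orbit_reps {n : ℕ} {J : Set X}
    (hreps : ∀ x : X, ∃! j : X, j ∈ J ∧ x ∈ MulAction.orbit G j)
    {c : (Fin (n + 1) → G) → X → ℝ} (hc : IsEquivCochain c) {N : ℝ}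
    (hB : ∀ j ∈ J, ∃ B : (Fin n → G) → ℝ,
      (∀ s ∈ MulAction.stabilizer G j, ∀ y, B (fun i => s * y i) = B y) ∧
        gcoboundary B = (fun y => c y j) ∧ ∀ y, |B y| ≤ N) :
    ∃ b : (Fin n → G) → X → ℝ, IsEquivCochain b ∧ IsBddFun₂ b ∧ gcoboundaryC b = c := by
  obtain ⟨r, γ, hrJ, hγ, hr⟩ := exists_orbit_rep_fun hreps
  choose! B hBinv hBc hBN using hB
  refine ⟨fun y v => B (r v) fun i => (γ v)⁻¹ * y i, fun g y v => ?_,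
    ⟨N, fun y v => hBN _ (hrJ v) _⟩, funext fun y => funext fun v => ?_⟩
  · have hs : (γ (g • v))⁻¹ * g * γ v ∈ MulAction.stabilizer G (r v) := by
      have h := hγ (g • v)
      rw [hr] at h
      rw [MulAction.mem_stabilizer_iff, mul_smul, mul_smul, hγ, inv_smul_eq_iff, h]
    have hargs : (fun i => (γ (g • v))⁻¹ * (g * y i))
        = fun i => (γ (g • v))⁻¹ * g * γ v * ((γ v)⁻¹ * y i) := by
      funext i
      group
    simp only [hr, hargs]
    exact hBinv _ (hrJ v) _ hs _
  · have h := hc (γ v) (fun i => (γ v)⁻¹ * y i) (r v)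
    simp only [mul_inv_cancel_left, hγ] at h
    exact (congrFun (hBc _ (hrJ v)) _).trans h.symm

end OrbitRepresentatives

theorem vanishing_with_linfty_coefficients_general {G X : Type*} [Group G] [MulAction G X]
    (q : ℕ) (J : Set X)
    (hreps : ∀ x : X, ∃! j : X, j ∈ J ∧ x ∈ MulAction.orbit G j)
    (C : ℝ)
    (hstab : ∀ j ∈ J,
      ∀ c : (Fin (q + 1) → MulAction.stabilizer G j) → ℝ, IsInvCochain c →
        gcoboundary c = 0 → (∀ x, |c x| ≤ 1) →
        ∃ b : (Fin q → MulAction.stabilizer G j) → ℝ, IsInvCochain b ∧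
          gcoboundary b = c ∧ ∀ y, |b y| ≤ C) :
    ∀ c : (Fin (q + 1) → G) → X → ℝ, IsEquivCochain c → IsBddFun₂ c →
      gcoboundaryC c = 0 →
      ∃ b : (Fin q → G) → X → ℝ, IsEquivCochain b ∧ IsBddFun₂ b ∧ gcoboundaryC b = c := by
  rintro c hc ⟨C₀, hC₀⟩ hcoc
  have hM : 0 < |C₀| + 1 := by positivity
  refine exists_equivariant_primitive_of_orbit_reps hreps hc fun j hj =>
    exists_invariant_primitive_of_subgroup _ (hstab j hj) hM (fun s hs y => ?_)
      (funext fun y => congrFun (congrFun hcoc y) j) (fun y => ?_)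
  · simpa [MulAction.mem_stabilizer_iff.mp hs] using hc s y j
  · linarith [hC₀ y j, le_abs_self C₀]

/-- let `G` act on `X` with a set `J` of orbit representatives.  Fix `q > 0`
and suppose each stabilizer `G_j` (`j ∈ J`) has `H^q_b(G_j;ℝ) = 0` with `q`-th vanishing
modulus bounded by a uniform constant `C`.  Then `H^q_b(G; ℓ^∞(X)) = 0`. -/
theorem vanishing_with_linfty_coefficients {G X : Type*} [Group G] [MulAction G X]
    (q : ℕ) (hq : 0 < q) (J : Set X)
    (hreps : ∀ x : X, ∃! j : X, j ∈ J ∧ x ∈ MulAction.orbit G j)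
    (C : ℝ)
    (hstab : ∀ j ∈ J,
      ∀ c : (Fin (q + 1) → MulAction.stabilizer G j) → ℝ, IsInvCochain c →
        gcoboundary c = 0 → (∀ x, |c x| ≤ 1) →
        ∃ b : (Fin q → MulAction.stabilizer G j) → ℝ, IsInvCochain b ∧
          gcoboundary b = c ∧ ∀ y, |b y| ≤ C) :
    ∀ c : (Fin (q + 1) → G) → X → ℝ, IsEquivCochain c → IsBddFun₂ c →
      gcoboundaryC c = 0 →
      ∃ b : (Fin q → G) → X → ℝ, IsEquivCochain b ∧ IsBddFun₂ b ∧ gcoboundaryC b = c :=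
  vanishing_with_linfty_coefficients_general q J hreps C hstab
end
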